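/- arXiv:2106.04785 — 7 statements merged into one kernel-verified Lean document; each statement's English description precedes it below -/
import Mathlib

section
/- Let M₁ and M₂ be n × n complex matrices, let z ∈ ℂ, and assume σ_min := min{σ_min(M₁ − zI), σ_min(M₂ − zI)} > 0. Let σ_max := max{‖M₁ − zI‖, ‖M₂ − zI‖}. Then |L_{M₁}(z) − L_{M₂}(z)| ≤ 2(|log σ_min| + |log σ_max|) · rank(M₁ − M₂)/n, where L_M(z) = (1/n) log|det(M − zI)|. -/
open Matrix
open Polynomial

/-- The singular values of a square complex matrix `M`: square roots of the eigenvalues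
of the Hermitian matrix `Mᴴ * M` (unordered enumeration). -/
noncomputable def sv {n : ℕ} (M : Matrix (Fin n) (Fin n) ℂ) (i : Fin n) : ℝ :=
  Real.sqrt ((Matrix.isHermitian_conjTranspose_mul_self M).eigenvalues i)

/-- The smallest singular value. -/
noncomputable def sMin {n : ℕ} (M : Matrix (Fin n) (Fin n) ℂ) : ℝ := ⨅ i, sv M i

/-- The largest singular value, i.e. the operator (spectral) norm. -/
noncomputable def specNorm {n : ℕ} (M : Matrix (Fin n) (Fin n) ℂ) : ℝ := ⨆ i, sv M i

/-- The logarithmic potential `L_M(z) = (1/n) log |det (M − zI)|`. -/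
noncomputable def logPot {n : ℕ} (M : Matrix (Fin n) (Fin n) ℂ) (z : ℂ) : ℝ :=
  (1 / n) * Real.log ‖(M - z • 1).det‖


section RankComparisonHelpers

lemma root_eigvec {k : ℕ} (D : Matrix (Fin k) (Fin k) ℂ) {μ : ℂ}
    (hμ : μ ∈ D.charpoly.roots) : ∃ v : Fin k → ℂ, v ≠ 0 ∧ D *ᵥ v = μ • v := by
  have h0 : (D.charpoly).eval μ = 0 := (isRoot_of_mem_roots hμ)
  have hdet : (μ • (1 : Matrix (Fin k) (Fin k) ℂ) - D).det = 0 := by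
    have hmap : (RingHom.mapMatrix (Polynomial.evalRingHom μ)) (charmatrix D) =
        μ • (1 : Matrix (Fin k) (Fin k) ℂ) - D := by
      ext i j
      by_cases h : i = j <;>
        simp [h, charmatrix_apply, Matrix.one_apply, Matrix.diagonal_apply]
    have h2 := RingHom.map_det (Polynomial.evalRingHom μ) (charmatrix D)
    rw [hmap] at h2
    simpa [Matrix.charpoly] using h2.symm.trans h0
  obtain ⟨v, hv, hv0⟩ := (Matrix.exists_mulVec_eq_zero_iff).mpr hdet
  refine ⟨v, hv, ?_⟩
  rw [Matrix.sub_mulVec, sub_eq_zero] at hv0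
  rw [← hv0, smul_mulVec, one_mulVec]

lemma rank_factorization {n : ℕ} (M : Matrix (Fin n) (Fin n) ℂ) :
    ∃ (B : Matrix (Fin n) (Fin M.rank) ℂ) (Cm : Matrix (Fin M.rank) (Fin n) ℂ),
      M = B * Cm := by
  set V := LinearMap.range M.mulVecLin with hV
  have hfr : Module.finrank ℂ V = M.rank := rfl
  let b : Module.Basis (Fin M.rank) ℂ V := Module.finBasisOfFinrankEq ℂ V hfr
  refine ⟨fun i j => (b j : Fin n → ℂ) i,
    fun j l => b.repr ⟨M *ᵥ Pi.single l 1, ⟨Pi.single l 1, rfl⟩⟩ j, ?_⟩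
  ext i l
  set x : V := ⟨M *ᵥ Pi.single l 1, ⟨Pi.single l 1, rfl⟩⟩ with hx
  have hsum := b.sum_repr x
  have : ((∑ j, b.repr x j • b j : V) : Fin n → ℂ) i = ((x : Fin n → ℂ)) i := by
    rw [hsum]
  simp only [AddSubmonoidClass.coe_finset_sum, SetLike.val_smul, Finset.sum_apply,
    Pi.smul_apply, smul_eq_mul] at this
  have hxi : (M *ᵥ Pi.single l 1) i = M i l := by
    simp [Matrix.mulVec_single]
  change M i l = ∑ j, (b j : Fin n → ℂ) i * b.repr x j
  rw [← hxi, show (M *ᵥ Pi.single l 1) i = (x : Fin n → ℂ) i from rfl, ← this]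
  exact Finset.sum_congr rfl fun j _ => mul_comm _ _

lemma star_dot_self (m : Type*) [Fintype m] (y : m → ℂ) :
    star y ⬝ᵥ y = ((∑ i, Complex.normSq (y i) : ℝ) : ℂ) := by
  push_cast
  simp [dotProduct, Complex.normSq_eq_conj_mul_self]

lemma qf_eq {n : ℕ} (A : Matrix (Fin n) (Fin n) ℂ) (w : Fin n → ℂ) :
    ∃ u : Fin n → ℂ,
      (∑ i, Complex.normSq ((A *ᵥ w) i))
        = ∑ i, (Matrix.isHermitian_conjTranspose_mul_self A).eigenvalues i * Complex.normSq (u i) ∧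
      (∑ i, Complex.normSq (u i)) = ∑ i, Complex.normSq (w i) := by
  set hH := Matrix.isHermitian_conjTranspose_mul_self A
  set U : Matrix (Fin n) (Fin n) ℂ := (hH.eigenvectorUnitary : Matrix (Fin n) (Fin n) ℂ) with hU
  set d : Fin n → ℂ := RCLike.ofReal ∘ hH.eigenvalues with hd
  set u : Fin n → ℂ := star U *ᵥ w with hu
  have hUu : U * star U = 1 := (Matrix.mem_unitaryGroup_iff).mp hH.eigenvectorUnitary.2
  have hstar_u : star u = star w ᵥ* U := by
    rw [hu, Matrix.star_mulVec, Matrix.star_eq_conjTranspose, Matrix.conjTranspose_conjTranspose]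
  have h3 : star u ⬝ᵥ (Matrix.diagonal d *ᵥ u) = ∑ i, (hH.eigenvalues i : ℂ) * Complex.normSq (u i) := by
    simp only [dotProduct, Matrix.mulVec_diagonal]
    refine Finset.sum_congr rfl fun i _ => ?_
    have hs : star (u i) = (starRingEnd ℂ) (u i) := rfl
    rw [Pi.star_apply, hs]
    rw [Complex.normSq_eq_conj_mul_self (z := u i)]
    simp [hd]
    ring
  refine ⟨u, ?_, ?_⟩
  · have key : ((∑ i, Complex.normSq ((A *ᵥ w) i) : ℝ) : ℂ)
        = ((∑ i, hH.eigenvalues i * Complex.normSq (u i) : ℝ) : ℂ) := by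
      rw [← star_dot_self]
      calc star (A *ᵥ w) ⬝ᵥ (A *ᵥ w)
          = (star w ᵥ* Aᴴ) ⬝ᵥ (A *ᵥ w) := by rw [← Matrix.star_mulVec]
        _ = star w ⬝ᵥ (Aᴴ *ᵥ (A *ᵥ w)) := (Matrix.dotProduct_mulVec _ _ _).symm
        _ = star w ⬝ᵥ ((Aᴴ * A) *ᵥ w) := by rw [Matrix.mulVec_mulVec]
        _ = star w ⬝ᵥ (U *ᵥ (Matrix.diagonal d *ᵥ u)) := by
            conv_lhs => rw [hH.spectral_theorem, Unitary.conjStarAlgAut_apply]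
            rw [← Matrix.mulVec_mulVec, ← Matrix.mulVec_mulVec]
        _ = (star w ᵥ* U) ⬝ᵥ (Matrix.diagonal d *ᵥ u) := Matrix.dotProduct_mulVec _ _ _
        _ = star u ⬝ᵥ (Matrix.diagonal d *ᵥ u) := by rw [← hstar_u]
        _ = ∑ i, (hH.eigenvalues i : ℂ) * Complex.normSq (u i) := h3
        _ = ((∑ i, hH.eigenvalues i * Complex.normSq (u i) : ℝ) : ℂ) := by push_cast; rfl
    exact_mod_cast key
  · have key : ((∑ i, Complex.normSq (u i) : ℝ) : ℂ) = ((∑ i, Complex.normSq (w i) : ℝ) : ℂ) := by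
      rw [← star_dot_self, ← star_dot_self]
      calc star u ⬝ᵥ u
          = (star w ᵥ* U) ⬝ᵥ (star U *ᵥ w) := by rw [← hstar_u, ← hu]
        _ = star w ⬝ᵥ (U *ᵥ (star U *ᵥ w)) := (Matrix.dotProduct_mulVec _ _ _).symm
        _ = star w ⬝ᵥ ((U * star U) *ᵥ w) := by rw [Matrix.mulVec_mulVec]
        _ = star w ⬝ᵥ w := by rw [hUu, Matrix.one_mulVec]
    exact_mod_cast key

lemma qf_bounds {n : ℕ} (hn : 0 < n) (A : Matrix (Fin n) (Fin n) ℂ) (w : Fin n → ℂ) :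
    sMin A ^ 2 * (∑ i, Complex.normSq (w i)) ≤ (∑ i, Complex.normSq ((A *ᵥ w) i)) ∧
    (∑ i, Complex.normSq ((A *ᵥ w) i)) ≤ specNorm A ^ 2 * (∑ i, Complex.normSq (w i)) := by
  haveI : Nonempty (Fin n) := ⟨⟨0, hn⟩⟩
  obtain ⟨u, hqe, hnorm⟩ := qf_eq A w
  set hH := Matrix.isHermitian_conjTranspose_mul_self A
  have hlam : ∀ i, 0 ≤ hH.eigenvalues i := by
    open scoped ComplexOrder in
    exact fun i => (Matrix.posSemidef_conjTranspose_mul_self A).eigenvalues_nonneg i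
  have hsv : ∀ i, sv A i ^ 2 = hH.eigenvalues i := fun i => Real.sq_sqrt (hlam i)
  have hsv0 : ∀ i, 0 ≤ sv A i := fun i => Real.sqrt_nonneg _
  have hminle : ∀ i, sMin A ≤ sv A i := fun i => ciInf_le (Finite.bddBelow_range _) i
  have hlemax : ∀ i, sv A i ≤ specNorm A := fun i => le_ciSup (Finite.bddAbove_range _) i
  have hmin0 : 0 ≤ sMin A := Real.iInf_nonneg hsv0
  have hlow : ∀ i, sMin A ^ 2 ≤ hH.eigenvalues i := fun i => by
    rw [← hsv i]; exact pow_le_pow_left₀ hmin0 (hminle i) 2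
  have hhigh : ∀ i, hH.eigenvalues i ≤ specNorm A ^ 2 := fun i => by
    rw [← hsv i]; exact pow_le_pow_left₀ (hsv0 i) (hlemax i) 2
  constructor
  · rw [hqe, ← hnorm, Finset.mul_sum]
    exact Finset.sum_le_sum fun i _ =>
      mul_le_mul_of_nonneg_right (hlow i) (Complex.normSq_nonneg _)
  · rw [hqe, ← hnorm, Finset.mul_sum]
    exact Finset.sum_le_sum fun i _ =>
      mul_le_mul_of_nonneg_right (hhigh i) (Complex.normSq_nonneg _)

lemma sum_normSq_pos {n : ℕ} {v : Fin n → ℂ} (hv : v ≠ 0) :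
    0 < ∑ i, Complex.normSq (v i) := by
  obtain ⟨i, hi⟩ := Function.ne_iff.mp hv
  exact Finset.sum_pos' (fun j _ => Complex.normSq_nonneg _)
    ⟨i, Finset.mem_univ i, by simpa [Complex.normSq_pos] using hi⟩

lemma det_ne_zero_of_sMin_pos {n : ℕ} (hn : 0 < n) {A : Matrix (Fin n) (Fin n) ℂ}
    (hA : 0 < sMin A) : A.det ≠ 0 := by
  intro hdet
  obtain ⟨v, hvne, hv0⟩ := (Matrix.exists_mulVec_eq_zero_iff).mpr hdet
  have h1 := (qf_bounds hn A v).1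
  rw [hv0] at h1
  simp only [Pi.zero_apply, map_zero, Finset.sum_const_zero] at h1
  nlinarith [sum_normSq_pos hvne, sq_nonneg (sMin A), mul_pos (pow_pos hA 2) (sum_normSq_pos hvne)]

lemma sMin_le_specNorm {n : ℕ} (hn : 0 < n) (A : Matrix (Fin n) (Fin n) ℂ) :
    sMin A ≤ specNorm A := by
  haveI : Nonempty (Fin n) := ⟨⟨0, hn⟩⟩
  exact le_trans (ciInf_le (Finite.bddBelow_range _) (Classical.arbitrary _))
    (le_ciSup (Finite.bddAbove_range _) _)

lemma eig_mod_bounds {n : ℕ} (hn : 0 < n) (A₁ A₂ : Matrix (Fin n) (Fin n) ℂ)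
    (h2 : A₂.det ≠ 0) {μ : ℂ} {u : Fin n → ℂ} (hu : u ≠ 0)
    (heig : (A₁ * A₂⁻¹) *ᵥ u = μ • u) {σm σM : ℝ}
    (hσm : 0 < σm) (h1m : σm ≤ sMin A₁) (h2m : σm ≤ sMin A₂)
    (h1M : specNorm A₁ ≤ σM) (h2M : specNorm A₂ ≤ σM) :
    σm / σM ≤ ‖μ‖ ∧ ‖μ‖ ≤ σM / σm := by
  have hunit : IsUnit A₂.det := isUnit_iff_ne_zero.mpr h2
  set w : Fin n → ℂ := A₂⁻¹ *ᵥ u with hw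
  have hA2w : A₂ *ᵥ w = u := by
    rw [hw, Matrix.mulVec_mulVec, Matrix.mul_nonsing_inv _ hunit, Matrix.one_mulVec]
  have hA1w : A₁ *ᵥ w = μ • (A₂ *ᵥ w) := by
    rw [hA2w, hw, Matrix.mulVec_mulVec]; exact heig
  have hwne : w ≠ 0 := by
    intro h0; apply hu; rw [← hA2w, h0, Matrix.mulVec_zero]
  have ht : 0 < ∑ i, Complex.normSq (w i) := sum_normSq_pos hwne
  have hsum1 : (∑ i, Complex.normSq ((A₁ *ᵥ w) i))
      = Complex.normSq μ * ∑ i, Complex.normSq ((A₂ *ᵥ w) i) := by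
    rw [Finset.mul_sum]
    refine Finset.sum_congr rfl fun i _ => ?_
    rw [hA1w]; simp [Complex.normSq_mul]
  have hb1 := (qf_bounds hn A₁ w).1
  have hb1' := (qf_bounds hn A₁ w).2
  have hb2 := (qf_bounds hn A₂ w).1
  have hb2' := (qf_bounds hn A₂ w).2
  have hσM : 0 < σM := lt_of_lt_of_le hσm (le_trans h2m (le_trans (sMin_le_specNorm hn A₂) h2M))
  have habs : ‖μ‖ ^ 2 = Complex.normSq μ := Complex.sq_norm μ
  have hab0 : 0 ≤ ‖μ‖ := norm_nonneg μ
  have e0 : 0 ≤ Complex.normSq μ := Complex.normSq_nonneg μ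
  have hsp2 : 0 ≤ specNorm A₂ := le_trans (le_trans hσm.le h2m) (sMin_le_specNorm hn A₂)
  have hsm2 : 0 ≤ sMin A₂ := le_trans hσm.le h2m
  constructor
  · rw [div_le_iff₀ hσM]
    have hchain : σm ^ 2 * (∑ i, Complex.normSq (w i))
        ≤ (Complex.normSq μ * σM ^ 2) * (∑ i, Complex.normSq (w i)) := by
      calc σm ^ 2 * (∑ i, Complex.normSq (w i))
          ≤ sMin A₁ ^ 2 * (∑ i, Complex.normSq (w i)) :=
            mul_le_mul_of_nonneg_right (pow_le_pow_left₀ hσm.le h1m 2) ht.le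
        _ ≤ ∑ i, Complex.normSq ((A₁ *ᵥ w) i) := hb1
        _ = Complex.normSq μ * ∑ i, Complex.normSq ((A₂ *ᵥ w) i) := hsum1
        _ ≤ Complex.normSq μ * (specNorm A₂ ^ 2 * ∑ i, Complex.normSq (w i)) :=
            mul_le_mul_of_nonneg_left hb2' e0
        _ ≤ Complex.normSq μ * (σM ^ 2 * ∑ i, Complex.normSq (w i)) :=
            mul_le_mul_of_nonneg_left
              (mul_le_mul_of_nonneg_right (pow_le_pow_left₀ hsp2 h2M 2) ht.le) e0
        _ = (Complex.normSq μ * σM ^ 2) * (∑ i, Complex.normSq (w i)) := by ring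
    have key : σm ^ 2 ≤ (‖μ‖ * σM) ^ 2 := by
      have := (mul_le_mul_iff_left₀ ht).mp hchain
      rw [mul_pow, habs]; linarith
    have := Real.sqrt_le_sqrt key
    rwa [Real.sqrt_sq hσm.le, Real.sqrt_sq (by positivity)] at this
  · rw [le_div_iff₀ hσm]
    have hchain : (Complex.normSq μ * σm ^ 2) * (∑ i, Complex.normSq (w i))
        ≤ σM ^ 2 * (∑ i, Complex.normSq (w i)) := by
      calc (Complex.normSq μ * σm ^ 2) * (∑ i, Complex.normSq (w i))
          = Complex.normSq μ * (σm ^ 2 * ∑ i, Complex.normSq (w i)) := by ring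
        _ ≤ Complex.normSq μ * (sMin A₂ ^ 2 * ∑ i, Complex.normSq (w i)) :=
            mul_le_mul_of_nonneg_left
              (mul_le_mul_of_nonneg_right (pow_le_pow_left₀ hσm.le h2m 2) ht.le) e0
        _ ≤ Complex.normSq μ * ∑ i, Complex.normSq ((A₂ *ᵥ w) i) :=
            mul_le_mul_of_nonneg_left hb2 e0
        _ = ∑ i, Complex.normSq ((A₁ *ᵥ w) i) := hsum1.symm
        _ ≤ specNorm A₁ ^ 2 * ∑ i, Complex.normSq (w i) := hb1'
        _ ≤ σM ^ 2 * (∑ i, Complex.normSq (w i)) := by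
            have h0 : 0 ≤ specNorm A₁ := le_trans (le_trans hσm.le h1m) (sMin_le_specNorm hn A₁)
            exact mul_le_mul_of_nonneg_right (pow_le_pow_left₀ h0 h1M 2) ht.le
    have key : (‖μ‖ * σm) ^ 2 ≤ σM ^ 2 := by
      have := (mul_le_mul_iff_left₀ ht).mp hchain
      rw [mul_pow, habs]; linarith
    have := Real.sqrt_le_sqrt key
    rwa [Real.sqrt_sq (by positivity), Real.sqrt_sq hσM.le] at this

lemma multiset_log_bound {B₀ : ℝ} (hB : 0 ≤ B₀) (s : Multiset ℂ)
    (h : ∀ μ ∈ s, ‖μ‖ ≠ 0 ∧ |Real.log (‖μ‖)| ≤ B₀) :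
    ‖s.prod‖ ≠ 0 ∧ |Real.log (‖s.prod‖)| ≤ s.card * B₀ := by
  induction s using Multiset.induction_on with
  | empty => simp
  | cons a s ih =>
    have ha := h a (Multiset.mem_cons_self a s)
    have hs := ih (fun μ hμ => h μ (Multiset.mem_cons_of_mem hμ))
    rw [Multiset.prod_cons, norm_mul, Multiset.card_cons]
    refine ⟨mul_ne_zero ha.1 hs.1, ?_⟩
    rw [Real.log_mul ha.1 hs.1]
    calc |Real.log (‖a‖) + Real.log (‖s.prod‖)|
        ≤ |Real.log (‖a‖)| + |Real.log (‖s.prod‖)| := abs_add_le _ _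
      _ ≤ B₀ + s.card * B₀ := add_le_add ha.2 hs.2
      _ = (s.card + 1 : ℕ) * B₀ := by push_cast; ring

end RankComparisonHelpers

/-- **Rank comparison principle.** -/
theorem rank_comparison_principle {n : ℕ}
    (M₁ M₂ : Matrix (Fin n) (Fin n) ℂ) (z : ℂ)
    (hmin : 0 < min (sMin (M₁ - z • 1)) (sMin (M₂ - z • 1))) :
    |logPot M₁ z - logPot M₂ z| ≤
      2 * (|Real.log (min (sMin (M₁ - z • 1)) (sMin (M₂ - z • 1)))| +
            |Real.log (max (specNorm (M₁ - z • 1)) (specNorm (M₂ - z • 1)))|) *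
        (((M₁ - M₂).rank : ℝ) / n) := by
  rcases Nat.eq_zero_or_pos n with hn | hn
  · exfalso
    subst hn
    have h0 : sMin (M₁ - z • 1) = 0 := Real.iInf_of_isEmpty _
    have h0' : sMin (M₂ - z • 1) = 0 := Real.iInf_of_isEmpty _
    rw [h0, h0', min_self] at hmin
    exact lt_irrefl 0 hmin
  set A₁ := M₁ - z • 1 with hA1def
  set A₂ := M₂ - z • 1 with hA2def
  set σm := min (sMin A₁) (sMin A₂) with hσmdef
  set σM := max (specNorm A₁) (specNorm A₂) with hσMdef
  have hσm : 0 < σm := hmin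
  set B₀ : ℝ := |Real.log σm| + |Real.log σM| with hB₀def
  have hB₀0 : 0 ≤ B₀ := add_nonneg (abs_nonneg _) (abs_nonneg _)
  have h1m : σm ≤ sMin A₁ := min_le_left _ _
  have h2m : σm ≤ sMin A₂ := min_le_right _ _
  have h1M : specNorm A₁ ≤ σM := le_max_left _ _
  have h2M : specNorm A₂ ≤ σM := le_max_right _ _
  have hσM : 0 < σM := lt_of_lt_of_le hσm (le_trans (le_trans h1m (sMin_le_specNorm hn A₁)) h1M)
  have hdet2 : A₂.det ≠ 0 := det_ne_zero_of_sMin_pos hn (lt_of_lt_of_le hσm h2m)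
  have hunit2 : IsUnit A₂.det := isUnit_iff_ne_zero.mpr hdet2
  have hlogs : ∀ μ : ℂ, σm / σM ≤ ‖μ‖ → ‖μ‖ ≤ σM / σm →
      |Real.log (‖μ‖)| ≤ B₀ := by
    intro μ hlo hhi
    have hdd : 0 < σm / σM := div_pos hσm hσM
    have hpos : 0 < ‖μ‖ := lt_of_lt_of_le hdd hlo
    rw [abs_le]
    constructor
    · have hl := (Real.log_le_log_iff hdd hpos).mpr hlo
      rw [Real.log_div (ne_of_gt hσm) (ne_of_gt hσM)] at hl
      have h1 := neg_abs_le (Real.log σm)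
      have h2 := le_abs_self (Real.log σM)
      rw [hB₀def]; linarith
    · have hl := (Real.log_le_log_iff hpos (div_pos hσM hσm)).mpr hhi
      rw [Real.log_div (ne_of_gt hσM) (ne_of_gt hσm)] at hl
      have h1 := le_abs_self (Real.log σM)
      have h2 := neg_abs_le (Real.log σm)
      rw [hB₀def]; linarith
  obtain ⟨B, Cm, hBC⟩ := rank_factorization (M₁ - M₂)
  set E := Cm * A₂⁻¹ with hEdef
  have hC : A₁ * A₂⁻¹ = 1 + B * E := by
    have hsplit : A₁ = A₂ + (M₁ - M₂) := by
      rw [hA1def, hA2def]; abel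
    rw [hsplit, Matrix.add_mul, Matrix.mul_nonsing_inv _ hunit2, hEdef, ← Matrix.mul_assoc, ← hBC]
  set D := 1 + E * B with hDdef
  have hdetCD : (A₁ * A₂⁻¹).det = D.det := by
    rw [hC, hDdef]; exact Matrix.det_one_add_mul_comm B E
  have hcard : (Matrix.charpoly D).roots.card = (M₁ - M₂).rank := by
    rw [Polynomial.splits_iff_card_roots.mp (IsAlgClosed.splits _),
      Matrix.charpoly_natDegree_eq_dim, Fintype.card_fin]
  have hroot : ∀ μ ∈ (Matrix.charpoly D).roots,
      ‖μ‖ ≠ 0 ∧ |Real.log (‖μ‖)| ≤ B₀ := by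
    intro μ hμ
    obtain ⟨v, hv, hDv⟩ := root_eigvec D hμ
    by_cases h1 : μ = 1
    · subst h1
      simp
      exact hB₀0
    · have hEB : (E * B) *ᵥ v = (μ - 1) • v := by
        have hD : D *ᵥ v = v + (E * B) *ᵥ v := by
          rw [hDdef, Matrix.add_mulVec, Matrix.one_mulVec]
        rw [hD] at hDv
        have : (E * B) *ᵥ v = μ • v - v := by
          rw [← hDv]; abel
        rw [this, sub_smul, one_smul]
      set u := B *ᵥ v with hudef
      have hCu : (A₁ * A₂⁻¹) *ᵥ u = μ • u := by
        rw [hC, Matrix.add_mulVec, Matrix.one_mulVec]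
        have hBEu : (B * E) *ᵥ u = (μ - 1) • u := by
          calc (B * E) *ᵥ u = (B * E * B) *ᵥ v := by rw [hudef, Matrix.mulVec_mulVec]
            _ = B *ᵥ ((E * B) *ᵥ v) := by rw [Matrix.mulVec_mulVec, Matrix.mul_assoc]
            _ = B *ᵥ ((μ - 1) • v) := by rw [hEB]
            _ = (μ - 1) • u := by rw [Matrix.mulVec_smul, hudef]
        rw [hBEu, sub_smul, one_smul]; abel
      have hune : u ≠ 0 := by
        intro h0
        have hEu : (E * B) *ᵥ v = E *ᵥ u := by
          rw [hudef, Matrix.mulVec_mulVec]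
        rw [h0, Matrix.mulVec_zero, hEB] at hEu
        exact (smul_ne_zero (sub_ne_zero.mpr h1) hv) hEu
      have hb := eig_mod_bounds hn A₁ A₂ hdet2 hune hCu hσm h1m h2m h1M h2M
      exact ⟨ne_of_gt (lt_of_lt_of_le (div_pos hσm hσM) hb.1), hlogs μ hb.1 hb.2⟩
  have hmain := multiset_log_bound hB₀0 _ hroot
  rw [hcard] at hmain
  rw [← Matrix.det_eq_prod_roots_charpoly] at hmain
  have habs2 : ‖A₂.det‖ ≠ 0 := norm_ne_zero_iff.mpr hdet2
  have hA1eq : A₁ = (A₁ * A₂⁻¹) * A₂ := by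
    rw [Matrix.mul_assoc, Matrix.nonsing_inv_mul _ hunit2, Matrix.mul_one]
  have hlogdet : Real.log (‖A₁.det‖)
      = Real.log (‖D.det‖) + Real.log (‖A₂.det‖) := by
    conv_lhs => rw [hA1eq]
    rw [Matrix.det_mul, hdetCD, norm_mul, Real.log_mul hmain.1 habs2]
  have hdiff : logPot M₁ z - logPot M₂ z = (1 / (n : ℝ)) * Real.log (‖D.det‖) := by
    simp only [logPot, ← hA1def, ← hA2def]
    rw [hlogdet]; ring
  rw [hdiff]
  have hn' : (0 : ℝ) < (n : ℝ) := Nat.cast_pos.mpr hn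
  calc |(1 / (n : ℝ)) * Real.log (‖D.det‖)|
      = (1 / (n : ℝ)) * |Real.log (‖D.det‖)| := by
        rw [abs_mul, abs_of_nonneg (by positivity)]
    _ ≤ (1 / (n : ℝ)) * (((M₁ - M₂).rank : ℝ) * B₀) :=
        mul_le_mul_of_nonneg_left hmain.2 (by positivity)
    _ = B₀ * (((M₁ - M₂).rank : ℝ) / n) := by ring
    _ ≤ 2 * B₀ * (((M₁ - M₂).rank : ℝ) / n) := by
        have hnn : 0 ≤ B₀ * (((M₁ - M₂).rank : ℝ) / n) := by positivity
        linarith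
end

section
/- Let M₁ and M₂ be n × n complex matrices, z ∈ ℂ, ε ∈ (0, 1/2). Assume σ_min := min{σ_min(M₁ − zI), σ_min(M₂ − zI)} > 0 and ‖M₁ − M₂‖ < ε/2. Then |L_{M₁}(z) − L_{M₂}(z)| ≤ 6(|log(ε/2)| + |log σ_min|) · ν_{M₂−zI}([0,ε]) + (2/ε)‖M₁ − M₂‖, where ν_A is the empirical measure of singular values of A and L_M(z) = (1/n) log|det(M − zI)|. -/
open Matrix

open scoped Classical in
/-- The empirical singular value measure of `A` evaluated on the set `[0, ε]`:
`ν_A([0,ε]) = (1/n) #{j : σ_j(A) ∈ [0, ε]}`. -/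
noncomputable def nuIcc {n : ℕ} (A : Matrix (Fin n) (Fin n) ℂ) (ε : ℝ) : ℝ :=
  ((Finset.univ.filter (fun i => sv A i ∈ Set.Icc (0 : ℝ) ε)).card : ℝ) / n

section Helpers
open Finset
variable {n : ℕ}

lemma sv_nonneg (A : Matrix (Fin n) (Fin n) ℂ) (i : Fin n) : 0 ≤ sv A i := Real.sqrt_nonneg _

lemma sq_sv (A : Matrix (Fin n) (Fin n) ℂ) (i : Fin n) :
    sv A i ^ 2 = (Matrix.isHermitian_conjTranspose_mul_self A).eigenvalues i :=
  Real.sq_sqrt (Matrix.eigenvalues_conjTranspose_mul_self_nonneg A i)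

lemma eig_congr {A B : Matrix (Fin n) (Fin n) ℂ} (h : A = B) (hA : A.IsHermitian)
    (hB : B.IsHermitian) : hA.eigenvalues = hB.eigenvalues := by subst h; rfl

lemma sv_congr {A B : Matrix (Fin n) (Fin n) ℂ} (h : Aᴴ * A = Bᴴ * B) : sv A = sv B := by
  funext i
  unfold sv
  rw [eig_congr h (isHermitian_conjTranspose_mul_self A) (isHermitian_conjTranspose_mul_self B)]

lemma sv_neg (A : Matrix (Fin n) (Fin n) ℂ) : sv (-A) = sv A :=
  sv_congr (by simp)

lemma toEuclideanLin_mul (M N : Matrix (Fin n) (Fin n) ℂ) (v : EuclideanSpace ℂ (Fin n)) :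
    toEuclideanLin (M * N) v = toEuclideanLin M (toEuclideanLin N v) := by
  simp [toEuclideanLin_apply, mulVec_mulVec]

lemma norm_tel_sq (A : Matrix (Fin n) (Fin n) ℂ) (x : EuclideanSpace ℂ (Fin n)) :
    ‖toEuclideanLin A x‖ ^ 2
      = Complex.re (inner (𝕜 := ℂ) x (toEuclideanLin (Aᴴ * A) x)) := by
  rw [toEuclideanLin_mul, Matrix.toEuclideanLin_conjTranspose_eq_adjoint,
    LinearMap.adjoint_inner_right]
  exact (inner_self_eq_norm_sq (𝕜 := ℂ) _).symm

lemma tel_eigen (A : Matrix (Fin n) (Fin n) ℂ) (j : Fin n) :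
    toEuclideanLin (Aᴴ * A) ((Matrix.isHermitian_conjTranspose_mul_self A).eigenvectorBasis j)
      = (((Matrix.isHermitian_conjTranspose_mul_self A).eigenvalues j : ℂ))
          • (Matrix.isHermitian_conjTranspose_mul_self A).eigenvectorBasis j := by
  have h := (Matrix.isHermitian_conjTranspose_mul_self A).mulVec_eigenvectorBasis j
  apply (WithLp.equiv 2 _).injective
  simpa [toEuclideanLin_apply, ← Complex.coe_smul] using h

lemma norm_sum_sq (A : Matrix (Fin n) (Fin n) ℂ) {ι : Type} [Fintype ι] (e : ι → Fin n)
    (he : Function.Injective e) (c : ι → ℂ) :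
    ‖∑ j, c j • (Matrix.isHermitian_conjTranspose_mul_self A).eigenvectorBasis (e j)‖ ^ 2
      = ∑ j, ‖c j‖ ^ 2 := by
  have horth := ((Matrix.isHermitian_conjTranspose_mul_self A).eigenvectorBasis).orthonormal.comp e he
  have h := horth.inner_sum c c Finset.univ
  have h2 : ‖∑ j, c j • (Matrix.isHermitian_conjTranspose_mul_self A).eigenvectorBasis (e j)‖ ^ 2
      = Complex.re (inner (𝕜 := ℂ)
        (∑ j, c j • (Matrix.isHermitian_conjTranspose_mul_self A).eigenvectorBasis (e j))
        (∑ j, c j • (Matrix.isHermitian_conjTranspose_mul_self A).eigenvectorBasis (e j))) :=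
    (inner_self_eq_norm_sq (𝕜 := ℂ) _).symm
  rw [h2]
  simp only [Function.comp] at h
  rw [h]
  rw [Complex.re_sum]
  refine Finset.sum_congr rfl fun j _ => ?_
  simp [Complex.conj_mul', Complex.normSq_eq_norm_sq, ← Complex.ofReal_pow, Complex.ofReal_re]

lemma norm_tel_sum_sq (A : Matrix (Fin n) (Fin n) ℂ) {ι : Type} [Fintype ι] (e : ι → Fin n)
    (he : Function.Injective e) (c : ι → ℂ) :
    ‖toEuclideanLin A
        (∑ j, c j • (Matrix.isHermitian_conjTranspose_mul_self A).eigenvectorBasis (e j))‖ ^ 2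
      = ∑ j, sv A (e j) ^ 2 * ‖c j‖ ^ 2 := by
  have horth := ((Matrix.isHermitian_conjTranspose_mul_self A).eigenvectorBasis).orthonormal.comp e he
  rw [norm_tel_sq]
  have hmap : toEuclideanLin (Aᴴ * A)
        (∑ j, c j • (Matrix.isHermitian_conjTranspose_mul_self A).eigenvectorBasis (e j))
      = ∑ j, (((Matrix.isHermitian_conjTranspose_mul_self A).eigenvalues (e j) : ℂ) * c j)
          • (Matrix.isHermitian_conjTranspose_mul_self A).eigenvectorBasis (e j) := by
    rw [map_sum]
    refine Finset.sum_congr rfl fun j _ => ?_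
    rw [LinearMap.map_smul, tel_eigen, smul_smul, mul_comm]
  rw [hmap]
  have h := horth.inner_sum c
    (fun j => ((Matrix.isHermitian_conjTranspose_mul_self A).eigenvalues (e j) : ℂ) * c j)
    Finset.univ
  simp only [Function.comp] at h
  rw [h, Complex.re_sum]
  refine Finset.sum_congr rfl fun j _ => ?_
  rw [sq_sv]
  have : (starRingEnd ℂ) (c j) * (((Matrix.isHermitian_conjTranspose_mul_self A).eigenvalues (e j) : ℂ) * c j)
      = ((Matrix.isHermitian_conjTranspose_mul_self A).eigenvalues (e j) : ℂ)
        * ((starRingEnd ℂ) (c j) * c j) := by ring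
  rw [this]
  rw [Complex.conj_mul', ← Complex.ofReal_pow, ← Complex.ofReal_mul, Complex.ofReal_re]

lemma sv_le_specNorm (A : Matrix (Fin n) (Fin n) ℂ) (i : Fin n) : sv A i ≤ specNorm A :=
  le_ciSup (Set.Finite.bddAbove (Set.finite_range _)) i

lemma sMin_le_sv (A : Matrix (Fin n) (Fin n) ℂ) (i : Fin n) : sMin A ≤ sv A i :=
  ciInf_le (Set.Finite.bddBelow (Set.finite_range _)) i

lemma specNorm_nonneg (hn : 0 < n) (A : Matrix (Fin n) (Fin n) ℂ) : 0 ≤ specNorm A :=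
  le_trans (sv_nonneg A ⟨0, hn⟩) (sv_le_specNorm A ⟨0, hn⟩)

lemma tel_norm_le (hn : 0 < n) (E : Matrix (Fin n) (Fin n) ℂ) (x : EuclideanSpace ℂ (Fin n)) :
    ‖toEuclideanLin E x‖ ≤ specNorm E * ‖x‖ := by
  have hb := (Matrix.isHermitian_conjTranspose_mul_self E).eigenvectorBasis.sum_repr x
  set c : Fin n → ℂ := fun i => (Matrix.isHermitian_conjTranspose_mul_self E).eigenvectorBasis.repr x i with hc
  have hx : ∑ i, c i • (Matrix.isHermitian_conjTranspose_mul_self E).eigenvectorBasis (id i) = x := hb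
  have h1 := norm_tel_sum_sq E id Function.injective_id c
  have h2 := norm_sum_sq E id Function.injective_id c
  rw [hx] at h1 h2
  have hle : ‖toEuclideanLin E x‖ ^ 2 ≤ (specNorm E * ‖x‖) ^ 2 := by
    rw [h1, mul_pow, h2, Finset.mul_sum]
    refine Finset.sum_le_sum fun i _ => ?_
    have := pow_le_pow_left₀ (sv_nonneg E i) (sv_le_specNorm E i) 2
    exact mul_le_mul_of_nonneg_right this (sq_nonneg _)
  exact le_of_pow_le_pow_left₀ two_ne_zero
    (mul_nonneg (specNorm_nonneg hn E) (norm_nonneg _)) hle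

lemma weyl (hn : 0 < n) (A B : Matrix (Fin n) (Fin n) ℂ) (k : Fin n) :
    sv A (Tuple.sort (sv A) k) ≤ sv B (Tuple.sort (sv B) k) + specNorm (A - B) := by
  classical
  set bA := (Matrix.isHermitian_conjTranspose_mul_self A).eigenvectorBasis with hbA
  set bB := (Matrix.isHermitian_conjTranspose_mul_self B).eigenvectorBasis with hbB
  set τA := Tuple.sort (sv A) with hτA
  set τB := Tuple.sort (sv B) with hτB
  set eB : ↥(Finset.Iic k) → Fin n := fun j => τB j.1 with heBdef
  set eA : ↥(Finset.Ici k) → Fin n := fun j => τA j.1 with heAdef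
  have heB : Function.Injective eB := τB.injective.comp Subtype.val_injective
  have heA : Function.Injective eA := τA.injective.comp Subtype.val_injective
  set V := Submodule.span ℂ (Set.range fun j => bB (eB j)) with hV
  set W := Submodule.span ℂ (Set.range fun j => bA (eA j)) with hW
  have hVrank : Module.finrank ℂ V = (k : ℕ) + 1 := by
    have h := finrank_span_eq_card ((bB.orthonormal.comp eB heB).linearIndependent)
    simp only [Function.comp_def] at h
    rw [hV, h]
    rw [Fintype.card_coe, Fin.card_Iic]
  have hWrank : Module.finrank ℂ W = n - (k : ℕ) := by
    have h := finrank_span_eq_card ((bA.orthonormal.comp eA heA).linearIndependent)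
    simp only [Function.comp_def] at h
    rw [hW, h]
    rw [Fintype.card_coe, Fin.card_Ici]
  have hsup : Module.finrank ℂ ↥(V ⊔ W) ≤ n := by
    refine le_trans (Submodule.finrank_le _) ?_
    simp [finrank_euclideanSpace_fin]
  have hinf : 0 < Module.finrank ℂ ↥(V ⊓ W) := by
    have heq := Submodule.finrank_sup_add_finrank_inf_eq V W
    have hk := k.isLt
    omega
  have hne : V ⊓ W ≠ ⊥ := by
    intro h
    rw [h, finrank_bot] at hinf
    exact lt_irrefl 0 hinf
  obtain ⟨x, hxVW, hx0⟩ := Submodule.exists_mem_ne_zero_of_ne_bot hne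
  have hxV : x ∈ V := hxVW.1
  have hxW : x ∈ W := hxVW.2
  obtain ⟨cB, hcB⟩ := (Submodule.mem_span_range_iff_exists_fun ℂ).1 hxV
  obtain ⟨cA, hcA⟩ := (Submodule.mem_span_range_iff_exists_fun ℂ).1 hxW
  have hxnorm : 0 < ‖x‖ := norm_pos_iff.2 hx0
  -- upper bound for B
  have hBx : ‖toEuclideanLin B x‖ ≤ sv B (τB k) * ‖x‖ := by
    have h1 := norm_tel_sum_sq B eB heB cB
    have h2 := norm_sum_sq B eB heB cB
    rw [hcB] at h1 h2
    have hle : ‖toEuclideanLin B x‖ ^ 2 ≤ (sv B (τB k) * ‖x‖) ^ 2 := by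
      rw [h1, mul_pow, h2, Finset.mul_sum]
      refine Finset.sum_le_sum fun j _ => ?_
      have hjk : (j : Fin n) ≤ k := Finset.mem_Iic.1 j.2
      have hmono : sv B (eB j) ≤ sv B (τB k) := Tuple.monotone_sort (sv B) hjk
      exact mul_le_mul_of_nonneg_right (pow_le_pow_left₀ (sv_nonneg _ _) hmono 2) (sq_nonneg _)
    exact le_of_pow_le_pow_left₀ two_ne_zero
      (mul_nonneg (sv_nonneg _ _) (norm_nonneg _)) hle
  -- lower bound for A
  have hAx : sv A (τA k) * ‖x‖ ≤ ‖toEuclideanLin A x‖ := by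
    have h1 := norm_tel_sum_sq A eA heA cA
    have h2 := norm_sum_sq A eA heA cA
    rw [hcA] at h1 h2
    have hle : (sv A (τA k) * ‖x‖) ^ 2 ≤ ‖toEuclideanLin A x‖ ^ 2 := by
      rw [h1, mul_pow, h2, Finset.mul_sum]
      refine Finset.sum_le_sum fun j _ => ?_
      have hjk : k ≤ (j : Fin n) := Finset.mem_Ici.1 j.2
      have hmono : sv A (τA k) ≤ sv A (eA j) := Tuple.monotone_sort (sv A) hjk
      exact mul_le_mul_of_nonneg_right (pow_le_pow_left₀ (sv_nonneg _ _) hmono 2) (sq_nonneg _)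
    exact le_of_pow_le_pow_left₀ two_ne_zero (norm_nonneg _) hle
  -- perturbation
  have hsub : ‖toEuclideanLin A x‖ ≤ ‖toEuclideanLin B x‖ + specNorm (A - B) * ‖x‖ := by
    have hdiff : toEuclideanLin A x = toEuclideanLin B x + toEuclideanLin (A - B) x := by
      rw [map_sub]
      simp
    rw [hdiff]
    exact le_trans (norm_add_le _ _) (by gcongr; exact tel_norm_le hn (A - B) x)
  have hfinal : sv A (τA k) * ‖x‖ ≤ (sv B (τB k) + specNorm (A - B)) * ‖x‖ := by
    calc sv A (τA k) * ‖x‖ ≤ ‖toEuclideanLin A x‖ := hAx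
      _ ≤ ‖toEuclideanLin B x‖ + specNorm (A - B) * ‖x‖ := hsub
      _ ≤ sv B (τB k) * ‖x‖ + specNorm (A - B) * ‖x‖ := by gcongr
      _ = (sv B (τB k) + specNorm (A - B)) * ‖x‖ := by ring
  exact le_of_mul_le_mul_right hfinal hxnorm

lemma specNorm_neg (A : Matrix (Fin n) (Fin n) ℂ) : specNorm (-A) = specNorm A := by
  unfold specNorm; rw [sv_neg]

lemma abs_det_eq_prod_sv (A : Matrix (Fin n) (Fin n) ℂ) :
    ‖A.det‖ = ∏ i, sv A i := by
  have h1 : (Aᴴ * A).det = ∏ i, ((Matrix.isHermitian_conjTranspose_mul_self A).eigenvalues i : ℂ) :=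
    (Matrix.isHermitian_conjTranspose_mul_self A).det_eq_prod_eigenvalues
  have h2 : (Aᴴ * A).det = ((‖A.det‖ : ℝ) : ℂ) ^ 2 := by
    rw [det_mul, det_conjTranspose, Complex.star_def, Complex.conj_mul']
  have h3 : ‖A.det‖ ^ 2
      = ∏ i, (Matrix.isHermitian_conjTranspose_mul_self A).eigenvalues i := by
    have h4 : (((‖A.det‖ : ℝ) : ℂ)) ^ 2
        = ((∏ i, (Matrix.isHermitian_conjTranspose_mul_self A).eigenvalues i : ℝ) : ℂ) := by
      rw [← h2, h1]; push_cast; ring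
    exact_mod_cast h4
  have h5 : (∏ i, sv A i) ^ 2 = ‖A.det‖ ^ 2 := by
    rw [← Finset.prod_pow, h3]
    exact Finset.prod_congr rfl fun i _ => sq_sv A i
  calc ‖A.det‖ = Real.sqrt (‖A.det‖ ^ 2) :=
        (Real.sqrt_sq (by positivity)).symm
    _ = Real.sqrt ((∏ i, sv A i) ^ 2) := by rw [h5]
    _ = ∏ i, sv A i := Real.sqrt_sq (Finset.prod_nonneg fun i _ => sv_nonneg A i)

lemma abs_log_sub_log_le {a b c : ℝ} (hc : 0 < c) (ha : c ≤ a) (hb : c ≤ b) :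
    |Real.log a - Real.log b| ≤ |a - b| / c := by
  wlog hab : b ≤ a generalizing a b
  · rw [abs_sub_comm, abs_sub_comm a b]; exact this hb ha (le_of_not_ge hab)
  have ha0 : 0 < a := lt_of_lt_of_le hc ha
  have hb0 : 0 < b := lt_of_lt_of_le hc hb
  have hlog : Real.log b ≤ Real.log a := Real.log_le_log hb0 hab
  rw [abs_of_nonneg (sub_nonneg.2 hlog), abs_of_nonneg (sub_nonneg.2 hab)]
  rw [← Real.log_div (ne_of_gt ha0) (ne_of_gt hb0)]
  have h1 : Real.log (a / b) ≤ a / b - 1 := Real.log_le_sub_one_of_pos (div_pos ha0 hb0)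
  have h2 : a / b - 1 = (a - b) / b := by field_simp
  have h3 : (a - b) / b ≤ (a - b) / c := by
    apply div_le_div_of_nonneg_left (by linarith) hc hb
  linarith

lemma card_filter_perm (τ : Equiv.Perm (Fin n)) (p : Fin n → Prop) [DecidablePred p] :
    (Finset.univ.filter fun j => p (τ j)).card = (Finset.univ.filter p).card :=
  Finset.card_equiv τ (by simp)

end Helpers

/-- **Norm comparison principle.** -/
theorem norm_comparison_principle {n : ℕ}
    (M₁ M₂ : Matrix (Fin n) (Fin n) ℂ) (z : ℂ) (ε : ℝ)
    (hε : ε ∈ Set.Ioo (0 : ℝ) (1 / 2))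
    (hmin : 0 < min (sMin (M₁ - z • 1)) (sMin (M₂ - z • 1)))
    (hnorm : specNorm (M₁ - M₂) < ε / 2) :
    |logPot M₁ z - logPot M₂ z| ≤
      6 * (|Real.log (ε / 2)| +
            |Real.log (min (sMin (M₁ - z • 1)) (sMin (M₂ - z • 1)))|) *
          nuIcc (M₂ - z • 1) ε
        + (2 / ε) * specNorm (M₁ - M₂) := by
  classical
  obtain ⟨hε0, hε2⟩ := hε
  rcases Nat.eq_zero_or_pos n with hn0 | hn
  · exfalso
    subst hn0
    unfold sMin at hmin
    simp [Real.iInf_of_isEmpty] at hmin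
  set A₁ := M₁ - z • (1 : Matrix (Fin n) (Fin n) ℂ) with hA₁
  set A₂ := M₂ - z • (1 : Matrix (Fin n) (Fin n) ℂ) with hA₂
  set σm := min (sMin A₁) (sMin A₂) with hσmdef
  set t := specNorm (M₁ - M₂) with ht
  have hσm : 0 < σm := hmin
  have hE : A₁ - A₂ = M₁ - M₂ := sub_sub_sub_cancel_right _ _ _
  have ht0 : 0 ≤ t := specNorm_nonneg hn _
  set τ₁ := Tuple.sort (sv A₁) with hτ₁
  set τ₂ := Tuple.sort (sv A₂) with hτ₂
  set f := fun k => sv A₁ (τ₁ k) with hf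
  set g := fun k => sv A₂ (τ₂ k) with hg
  have hfm : ∀ k, σm ≤ f k := fun k =>
    le_trans (min_le_left _ _) (sMin_le_sv A₁ (τ₁ k))
  have hgm : ∀ k, σm ≤ g k := fun k =>
    le_trans (min_le_right _ _) (sMin_le_sv A₂ (τ₂ k))
  have hW1 : ∀ k, f k ≤ g k + t := by
    intro k
    have h := weyl hn A₁ A₂ k
    rwa [hE, ← ht] at h
  have hW2 : ∀ k, g k ≤ f k + t := by
    intro k
    have h := weyl hn A₂ A₁ k
    have h2 : specNorm (A₂ - A₁) = t := by
      rw [← neg_sub A₁ A₂, specNorm_neg, hE]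
    rwa [h2] at h
  -- log expansions
  have h_log1 : Real.log ‖A₁.det‖ = ∑ k, Real.log (f k) := by
    rw [abs_det_eq_prod_sv A₁,
      Real.log_prod (fun i _ => ne_of_gt (lt_of_lt_of_le hσm
        (le_trans (min_le_left _ _) (sMin_le_sv A₁ i))))]
    exact (Equiv.sum_comp τ₁ (fun i => Real.log (sv A₁ i))).symm
  have h_log2 : Real.log ‖A₂.det‖ = ∑ k, Real.log (g k) := by
    rw [abs_det_eq_prod_sv A₂,
      Real.log_prod (fun i _ => ne_of_gt (lt_of_lt_of_le hσm
        (le_trans (min_le_right _ _) (sMin_le_sv A₂ i))))]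
    exact (Equiv.sum_comp τ₂ (fun i => Real.log (sv A₂ i))).symm
  have hlp : logPot M₁ z - logPot M₂ z
      = (1 / (n : ℝ)) * ∑ k, (Real.log (f k) - Real.log (g k)) := by
    unfold logPot
    rw [← hA₁, ← hA₂, h_log1, h_log2, Finset.sum_sub_distrib]
    ring
  -- per-term bound
  have key : ∀ k, |Real.log (f k) - Real.log (g k)|
      ≤ if g k ≤ ε then 2 * |Real.log σm| else (2 / ε) * t := by
    intro k
    by_cases hk : g k ≤ ε
    · rw [if_pos hk]
      have hf1 : f k ≤ 1 := by have := hW1 k; linarith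
      have hg1 : g k ≤ 1 := by linarith
      have hbf : |Real.log (f k)| ≤ |Real.log σm| := by
        rw [abs_of_nonpos (Real.log_nonpos (by linarith [hfm k]) hf1)]
        have := Real.log_le_log hσm (hfm k)
        exact le_trans (by linarith) (neg_le_abs _)
      have hbg : |Real.log (g k)| ≤ |Real.log σm| := by
        rw [abs_of_nonpos (Real.log_nonpos (by linarith [hgm k]) hg1)]
        have := Real.log_le_log hσm (hgm k)
        exact le_trans (by linarith) (neg_le_abs _)
      calc |Real.log (f k) - Real.log (g k)|
          ≤ |Real.log (f k)| + |Real.log (g k)| := abs_sub _ _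
        _ ≤ 2 * |Real.log σm| := by linarith
    · rw [if_neg hk]
      push_neg at hk
      have hf2 : ε / 2 ≤ f k := by have := hW2 k; linarith
      have hg2 : ε / 2 ≤ g k := by linarith
      have hd : |f k - g k| ≤ t :=
        abs_sub_le_iff.2 ⟨by linarith [hW1 k], by linarith [hW2 k]⟩
      calc |Real.log (f k) - Real.log (g k)|
          ≤ |f k - g k| / (ε / 2) := abs_log_sub_log_le (by linarith) hf2 hg2
        _ ≤ t / (ε / 2) := by gcongr
        _ = (2 / ε) * t := by field_simp
  -- summing
  set B := (Finset.univ.filter fun k => g k ≤ ε).card with hB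
  set G := (Finset.univ.filter fun k => ¬ g k ≤ ε).card with hG
  have hsum : ∑ k, |Real.log (f k) - Real.log (g k)|
      ≤ (B : ℝ) * (2 * |Real.log σm|) + (G : ℝ) * ((2 / ε) * t) := by
    refine le_trans (Finset.sum_le_sum fun k _ => key k) ?_
    rw [Finset.sum_ite, Finset.sum_const, Finset.sum_const, nsmul_eq_mul, nsmul_eq_mul]
  -- identify B with nuIcc
  have hcard : (Finset.univ.filter (fun i => sv A₂ i ∈ Set.Icc (0 : ℝ) ε)).card = B := by
    rw [hB]
    apply Finset.card_equiv τ₂.symm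
    intro i
    simp only [Finset.mem_filter, Finset.mem_univ, true_and, Set.mem_Icc, hg,
      Equiv.apply_symm_apply]
    exact ⟨fun h => h.2, fun h => ⟨sv_nonneg A₂ i, h⟩⟩
  have hν : nuIcc A₂ ε = (B : ℝ) / n := by
    unfold nuIcc
    rw [hcard]
  have hν0 : 0 ≤ (B : ℝ) / (n : ℝ) := by positivity
  have hGn : (G : ℝ) / n ≤ 1 := by
    rw [div_le_one (by exact_mod_cast hn)]
    exact_mod_cast le_trans (Finset.card_filter_le _ _)
      (le_of_eq (Finset.card_univ.trans (Fintype.card_fin n)))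
  have habs : 0 ≤ |Real.log (ε / 2)| := abs_nonneg _
  have habs2 : 0 ≤ |Real.log σm| := abs_nonneg _
  have hn' : (0 : ℝ) < n := by exact_mod_cast hn
  rw [hlp, abs_mul, abs_of_nonneg (by positivity : (0:ℝ) ≤ 1 / (n : ℝ))]
  calc (1 / (n : ℝ)) * |∑ k, (Real.log (f k) - Real.log (g k))|
      ≤ (1 / (n : ℝ)) * ((B : ℝ) * (2 * |Real.log σm|) + (G : ℝ) * ((2 / ε) * t)) := by
        apply mul_le_mul_of_nonneg_left _ (by positivity)
        exact le_trans (Finset.abs_sum_le_sum_abs _ _) hsum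
    _ = 2 * |Real.log σm| * ((B : ℝ) / n) + ((2 / ε) * t) * ((G : ℝ) / n) := by ring
    _ ≤ 6 * (|Real.log (ε / 2)| + |Real.log σm|) * ((B : ℝ) / n) + ((2 / ε) * t) * 1 := by
        apply add_le_add
        · apply mul_le_mul_of_nonneg_right _ hν0
          linarith
        · apply mul_le_mul_of_nonneg_left hGn (by positivity)
    _ = 6 * (|Real.log (ε / 2)| + |Real.log σm|) * nuIcc A₂ ε + (2 / ε) * t := by
        rw [hν]; ring
end

section
/- Let k ≥ 0 be an integer, {a_j}_{|j| ≤ k} complex numbers, and f: S¹ → ℂ given by f(ω) = Σ_{|j| ≤ k} a_j ω^j. Let U be uniformly distributed on S¹ and let μ be the law of f(U). Let μ_n = (1/n) Σ_{i=0}^{n−1} δ_{f(ω_n^i)} where ω_n = exp(2πi/n). Then there is a constant C > 0 (depending only on k and {a_j}) such that the L¹-Wasserstein distance satisfies W₁(μ_n, μ) ≤ C/n for all n ≥ 1. -/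
open MeasureTheory
open scoped ENNReal NNReal

/-- The `L¹`-Wasserstein distance between two measures on `ℂ`, defined as the infimum over
all couplings `π` (measures on `ℂ × ℂ` with the given marginals) of `∫ |x − y| dπ(x,y)`. -/
noncomputable def W1 (μ ν : Measure ℂ) : ℝ≥0∞ :=
  ⨅ (π : Measure (ℂ × ℂ)) (_ : π.map Prod.fst = μ) (_ : π.map Prod.snd = ν),
    ∫⁻ p, edist p.1 p.2 ∂π

open Real


lemma lip_aux (k : ℕ) (a : ℤ → ℂ) :
    ∃ L : ℝ≥0, LipschitzWith L
      (fun t : ℝ => ∑ j ∈ Finset.Icc (-(k : ℤ)) (k : ℤ), a j * Complex.exp (Complex.I * j * t)) := by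
  set s := Finset.Icc (-(k : ℤ)) (k : ℤ)
  refine ⟨∑ j ∈ s, ‖a j‖₊ * ‖Complex.I * (j : ℂ)‖₊, ?_⟩
  set g' : ℝ → ℂ := fun t => ∑ j ∈ s, a j * (Complex.I * j * Complex.exp (Complex.I * j * t))
    with hg'
  have hderiv : ∀ t : ℝ, HasDerivAt
      (fun t : ℝ => ∑ j ∈ s, a j * Complex.exp (Complex.I * j * t)) (g' t) t := by
    intro t
    refine HasDerivAt.fun_sum fun j _ => ?_
    have h0 : HasDerivAt (fun z : ℂ => Complex.I * j * z) (Complex.I * j) (t : ℂ) := by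
      simpa using (hasDerivAt_id (t : ℂ)).const_mul (Complex.I * (j : ℂ))
    have h1 := h0.cexp
    have h2 := (h1.comp_ofReal).const_mul (a j)
    refine h2.congr_deriv ?_
    ring
  refine lipschitzWith_of_nnnorm_deriv_le (fun t => (hderiv t).differentiableAt) fun t => ?_
  rw [(hderiv t).deriv]
  refine le_trans (nnnorm_sum_le _ _) (Finset.sum_le_sum fun j _ => le_of_eq ?_)
  have hexp : ‖Complex.exp (Complex.I * j * t)‖₊ = 1 := by
    apply NNReal.coe_injective
    simp [coe_nnnorm, Complex.norm_exp]
  rw [nnnorm_mul, nnnorm_mul, hexp, mul_one]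


lemma map_step (n : ℕ) (hn : 1 ≤ n) (pts : ℕ → ℂ) :
    Measure.map (fun t : ℝ => pts (⌈(n : ℝ) * t / (2 * π)⌉ - 1).toNat)
      ((ENNReal.ofReal (2 * π))⁻¹ • volume.restrict (Set.Ioc 0 (2 * π)))
      = (n : ℝ≥0∞)⁻¹ • ∑ i ∈ Finset.range n, Measure.dirac (pts i) := by
  classical
  have h2pi : (0 : ℝ) < 2 * π := by positivity
  have hn0 : (0 : ℝ) < n := by exact_mod_cast hn
  set F : ℝ → ℂ := fun t => pts (⌈(n : ℝ) * t / (2 * π)⌉ - 1).toNat with hFdef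
  have hceilm : Measurable fun t : ℝ => ⌈(n : ℝ) * t / (2 * π)⌉ :=
    Measurable.ceil (by fun_prop)
  have hF : Measurable F := by
    have h : F = (fun z : ℤ => pts (z - 1).toNat) ∘ (fun t : ℝ => ⌈(n : ℝ) * t / (2 * π)⌉) := rfl
    rw [h]; exact measurable_from_top.comp hceilm
  have hidx : ∀ i : ℕ, i < n → ∀ t ∈ Set.Ioc (2 * π * i / n) (2 * π * (i + 1) / n),
      F t = pts i := by
    intro i hi t ht
    obtain ⟨h1, h2⟩ := ht
    have hx1 : (i : ℝ) < (n : ℝ) * t / (2 * π) := by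
      rw [lt_div_iff₀ h2pi]
      have := (div_lt_iff₀ hn0).mp h1
      nlinarith
    have hx2 : (n : ℝ) * t / (2 * π) ≤ (i : ℝ) + 1 := by
      rw [div_le_iff₀ h2pi]
      have := (le_div_iff₀ hn0).mp h2
      nlinarith
    have hceil : ⌈(n : ℝ) * t / (2 * π)⌉ = (i : ℤ) + 1 := by
      rw [Int.ceil_eq_iff]
      constructor <;> push_cast <;> simpa
    simp [hFdef, hceil]
  have hpart : Set.Ioc (0 : ℝ) (2 * π)
      = ⋃ i ∈ Finset.range n, Set.Ioc (2 * π * i / n) (2 * π * (i + 1) / n) := by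
    ext t
    simp only [Set.mem_iUnion, Finset.mem_range, Set.mem_Ioc, exists_prop]
    constructor
    · rintro ⟨ht0, ht2⟩
      set x := (n : ℝ) * t / (2 * π) with hxdef
      have hx0 : 0 < x := by rw [hxdef]; exact div_pos (mul_pos hn0 ht0) h2pi
      have hxn : x ≤ n := by
        rw [hxdef, div_le_iff₀ h2pi]
        nlinarith
      have hm1 : 1 ≤ ⌈x⌉ := by exact_mod_cast Int.ceil_pos.mpr hx0
      have hmn : ⌈x⌉ ≤ (n : ℤ) := Int.ceil_le.mpr (by exact_mod_cast hxn)
      refine ⟨(⌈x⌉ - 1).toNat, by omega, ?_, ?_⟩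
      · have hi : ((⌈x⌉ - 1).toNat : ℝ) < x := by
          have h := Int.ceil_lt_add_one x
          have : (((⌈x⌉ - 1).toNat : ℤ) : ℝ) < x := by
            rw [Int.toNat_of_nonneg (by omega)]
            push_cast
            linarith
          exact_mod_cast this
        calc 2 * π * ((⌈x⌉ - 1).toNat : ℝ) / n < 2 * π * x / n := by gcongr
        _ = t := by rw [hxdef]; field_simp
      · have hi : x ≤ ((⌈x⌉ - 1).toNat : ℝ) + 1 := by
          have : x ≤ ((⌈x⌉:ℝ)) := Int.le_ceil x
          have h2 : (((⌈x⌉ - 1).toNat : ℤ) : ℝ) = (⌈x⌉ : ℝ) - 1 := by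
            rw [Int.toNat_of_nonneg (by omega)]; push_cast; ring
          have h3 : (((⌈x⌉ - 1).toNat : ℕ) : ℝ) = (((⌈x⌉ - 1).toNat : ℤ) : ℝ) := by push_cast; rfl
          rw [h3, h2]; linarith
        calc t = 2 * π * x / n := by rw [hxdef]; field_simp
        _ ≤ 2 * π * (((⌈x⌉ - 1).toNat : ℝ) + 1) / n := by gcongr
    · rintro ⟨i, hi, h1, h2⟩
      have h0 : (0:ℝ) ≤ 2 * π * i / n := by positivity
      refine ⟨lt_of_le_of_lt h0 h1, le_trans h2 ?_⟩
      have : ((i:ℝ) + 1) ≤ n := by exact_mod_cast hi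
      calc 2 * π * ((i:ℝ) + 1) / n ≤ 2 * π * (n:ℝ) / n := by gcongr
      _ = 2 * π := by field_simp
  have hdisj : (↑(Finset.range n) : Set ℕ).PairwiseDisjoint
      (fun i : ℕ => Set.Ioc (2 * π * (i:ℝ) / n) (2 * π * ((i:ℝ) + 1) / n)) := by
    intro i _ j _ hij
    refine Set.Ioc_disjoint_Ioc.mpr ?_
    rcases hij.lt_or_gt with h | h
    · refine le_trans (min_le_left _ _) (le_trans ?_ (le_max_right _ _))
      have : ((i:ℝ) + 1) ≤ j := by exact_mod_cast h
      gcongr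
    · refine le_trans (min_le_right _ _) (le_trans ?_ (le_max_left _ _))
      have : ((j:ℝ) + 1) ≤ i := by exact_mod_cast h
      gcongr
  ext A hA
  rw [Measure.map_apply hF hA, Measure.smul_apply, Measure.smul_apply,
      Measure.restrict_apply (hF hA), Measure.finset_sum_apply]
  have hsets : F ⁻¹' A ∩ Set.Ioc 0 (2 * π)
      = ⋃ i ∈ Finset.range n,
          (F ⁻¹' A ∩ Set.Ioc (2 * π * (i:ℝ) / n) (2 * π * ((i:ℝ) + 1) / n)) := by
    rw [hpart, Set.inter_iUnion₂]
  rw [hsets, measure_biUnion_finset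
      (fun i hi j hj hij => (hdisj hi hj hij).mono Set.inter_subset_right Set.inter_subset_right)
      (fun i _ => (hF hA).inter measurableSet_Ioc)]
  have hterm : ∀ i ∈ Finset.range n,
      volume (F ⁻¹' A ∩ Set.Ioc (2 * π * (i:ℝ) / n) (2 * π * ((i:ℝ) + 1) / n))
        = ENNReal.ofReal (2 * π / n) * (if pts i ∈ A then 1 else 0) := by
    intro i hi
    rw [Finset.mem_range] at hi
    have hset : F ⁻¹' A ∩ Set.Ioc (2 * π * (i:ℝ) / n) (2 * π * ((i:ℝ) + 1) / n)
        = if pts i ∈ A then Set.Ioc (2 * π * (i:ℝ) / n) (2 * π * ((i:ℝ) + 1) / n) else ∅ := by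
      split_ifs with h
      · ext t
        constructor
        · exact fun ht => ht.2
        · exact fun ht => ⟨by simp only [Set.mem_preimage, hidx i hi t ht]; exact h, ht⟩
      · ext t
        simp only [Set.mem_inter_iff, Set.mem_preimage, Set.mem_empty_iff_false, iff_false,
          not_and]
        intro htA ht
        exact h (by rwa [hidx i hi t ht] at htA)
    rw [hset]
    split_ifs with h
    · rw [Real.volume_Ioc, mul_one]
      congr 1
      field_simp
      ring
    · simp
  rw [Finset.sum_congr rfl hterm, ← Finset.mul_sum]
  have hdirac : ∀ i ∈ Finset.range n,
      Measure.dirac (pts i) A = (if pts i ∈ A then (1:ℝ≥0∞) else 0) := by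
    intro i _
    rw [Measure.dirac_apply' _ hA]
    simp [Set.indicator_apply]
  rw [Finset.sum_congr rfl hdirac]
  simp only [smul_eq_mul]
  rw [← mul_assoc]
  congr 1
  rw [show (2 * π / (n:ℝ)) = (2 * π) * ((n:ℝ))⁻¹ by ring,
    ENNReal.ofReal_mul (le_of_lt h2pi), ← mul_assoc,
    ENNReal.inv_mul_cancel (ENNReal.ofReal_pos.mpr h2pi).ne' ENNReal.ofReal_ne_top, one_mul,
    ENNReal.ofReal_inv_of_pos hn0, ENNReal.ofReal_natCast]


/-- **Wasserstein approximation of the symbol measure by its discretization.**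
For `f(ω) = Σ_{|j| ≤ k} a_j ω^j`, `μ` the law of `f(U)` with `U` uniform on the unit circle,
and `μ_n = (1/n) Σ_{i<n} δ_{f(ω_n^i)}`, there is `C > 0` with `W₁(μ_n, μ) ≤ C/n` for all
`n ≥ 1`. -/
theorem wasserstein_discretization (k : ℕ) (a : ℤ → ℂ) :
    let f : ℂ → ℂ := fun ω => ∑ j ∈ Finset.Icc (-(k : ℤ)) (k : ℤ), a j * ω ^ j
    let μ : Measure ℂ :=
      Measure.map (fun t : ℝ => f (Complex.exp (Complex.I * t)))
        ((ENNReal.ofReal (2 * Real.pi))⁻¹ • volume.restrict (Set.Ioc 0 (2 * Real.pi)))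
    ∃ C : ℝ, 0 < C ∧ ∀ n : ℕ, 1 ≤ n →
      W1 ((n : ℝ≥0∞)⁻¹ •
            ∑ i ∈ Finset.range n,
              Measure.dirac (f (Complex.exp (2 * Real.pi * Complex.I * i / n)))) μ ≤
        ENNReal.ofReal (C / n) := by
  intro f μ
  classical
  obtain ⟨L, hL⟩ := lip_aux k a
  set g : ℝ → ℂ :=
    fun t => ∑ j ∈ Finset.Icc (-(k : ℤ)) (k : ℤ), a j * Complex.exp (Complex.I * j * t) with hg
  have hfg : ∀ t : ℝ, f (Complex.exp (Complex.I * t)) = g t := by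
    intro t
    refine Finset.sum_congr rfl fun j _ => ?_
    rw [← Complex.exp_int_mul,
      show ((j : ℂ)) * (Complex.I * (t : ℂ)) = Complex.I * (j : ℂ) * (t : ℂ) by ring]
  have h2pi : (0 : ℝ) < 2 * π := by positivity
  refine ⟨2 * π * L + 1, by positivity, fun n hn => ?_⟩
  have hn0 : (0 : ℝ) < n := by exact_mod_cast hn
  set pts : ℕ → ℂ := fun i => f (Complex.exp (2 * Real.pi * Complex.I * i / n)) with hpts
  set base : Measure ℝ :=
    (ENNReal.ofReal (2 * Real.pi))⁻¹ • volume.restrict (Set.Ioc 0 (2 * Real.pi)) with hbase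
  set F : ℝ → ℂ := fun t => pts (⌈(n : ℝ) * t / (2 * π)⌉ - 1).toNat with hFdef
  set G : ℝ → ℂ := fun t : ℝ => f (Complex.exp (Complex.I * t)) with hGdef
  have hGg : G = g := funext hfg
  have hF : Measurable F := by
    have h : F = (fun z : ℤ => pts (z - 1).toNat) ∘ fun t : ℝ => ⌈(n : ℝ) * t / (2 * π)⌉ := rfl
    rw [h]; exact measurable_from_top.comp (Measurable.ceil (by fun_prop))
  have hgcont : Continuous g := by
    rw [hg]; fun_prop
  have hG : Measurable G := by rw [hGg]; exact hgcont.measurable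
  set pc : Measure (ℂ × ℂ) := Measure.map (fun t => (F t, G t)) base with hpc
  have hpair : Measurable fun t => (F t, G t) := hF.prodMk hG
  have hfst : pc.map Prod.fst
      = ((n : ℝ≥0∞)⁻¹ • ∑ i ∈ Finset.range n, Measure.dirac (pts i)) := by
    rw [hpc, Measure.map_map measurable_fst hpair]
    exact map_step n hn pts
  have hsnd : pc.map Prod.snd = μ := by
    rw [hpc, Measure.map_map measurable_snd hpair]
    rfl
  have hpt : ∀ t ∈ Set.Ioc (0 : ℝ) (2 * π),
      edist (F t) (G t) ≤ ENNReal.ofReal ((L : ℝ) * (2 * π / n)) := by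
    intro t ht
    set x : ℝ := (n : ℝ) * t / (2 * π) with hx
    have hx0 : 0 < x := by rw [hx]; exact div_pos (mul_pos hn0 ht.1) h2pi
    have hm1 : 1 ≤ ⌈x⌉ := by exact_mod_cast Int.ceil_pos.mpr hx0
    set i : ℕ := (⌈x⌉ - 1).toNat with hi
    have hiz : ((i : ℤ) : ℝ) = (⌈x⌉ : ℝ) - 1 := by
      rw [hi, Int.toNat_of_nonneg (by omega)]; push_cast; ring
    have hir : (i : ℝ) = (⌈x⌉ : ℝ) - 1 := by exact_mod_cast hiz
    set s : ℝ := 2 * π * i / n with hs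
    have hFt : F t = g s := by
      have harg : 2 * (Real.pi : ℂ) * Complex.I * (i : ℂ) / (n : ℂ)
          = Complex.I * ((s : ℝ) : ℂ) := by
        rw [hs]; push_cast; ring
      show pts i = g s
      rw [hpts]
      simp only
      rw [harg, hfg s]
    have hGt : G t = g t := by rw [hGg]
    have hst : |s - t| ≤ 2 * π / n := by
      have htx : t = 2 * π * x / n := by rw [hx]; field_simp
      have h1 : (i : ℝ) < x := by
        rw [hir]; have := Int.ceil_lt_add_one x; linarith
      have h2 : x ≤ (i : ℝ) + 1 := by
        rw [hir]; have := Int.le_ceil x; linarith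
      rw [abs_le]
      constructor
      · have : t - s ≤ 2 * π / n := by
          rw [htx, hs]
          rw [div_sub_div_same, div_le_div_iff₀ hn0 hn0]
          nlinarith [mul_le_mul_of_nonneg_left h2 (le_of_lt h2pi), hn0.le]
        linarith
      · have : s ≤ t := by
          rw [htx, hs]
          rw [div_le_div_iff₀ hn0 hn0]
          nlinarith [mul_le_mul_of_nonneg_left h1.le (le_of_lt h2pi), hn0.le]
        have hc : 0 < 2 * π / n := by positivity
        linarith
    rw [hFt, hGt]
    calc edist (g s) (g t) ≤ L * edist s t := hL s t
      _ ≤ L * ENNReal.ofReal (2 * π / n) := by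
          rw [edist_dist, Real.dist_eq]
          exact mul_le_mul_right (ENNReal.ofReal_le_ofReal hst) _
      _ = ENNReal.ofReal ((L : ℝ) * (2 * π / n)) := by
          rw [ENNReal.ofReal_mul L.coe_nonneg, ENNReal.ofReal_coe_nnreal]
  have hint : ∫⁻ p, edist p.1 p.2 ∂pc ≤ ENNReal.ofReal ((L : ℝ) * (2 * π / n)) := by
    rw [hpc, lintegral_map (by fun_prop) hpair, hbase, lintegral_smul_measure]
    have h1 : ∫⁻ t, edist (F t) (G t) ∂(volume.restrict (Set.Ioc 0 (2 * π)))
        ≤ ENNReal.ofReal ((L : ℝ) * (2 * π / n)) * ENNReal.ofReal (2 * π) := by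
      refine le_trans (lintegral_mono_ae ((ae_restrict_iff' measurableSet_Ioc).mpr
        (ae_of_all _ hpt))) ?_
      rw [lintegral_const, Measure.restrict_apply_univ, Real.volume_Ioc]
      simp
    calc (ENNReal.ofReal (2 * π))⁻¹
          * ∫⁻ t, edist (F t) (G t) ∂(volume.restrict (Set.Ioc 0 (2 * π)))
        ≤ (ENNReal.ofReal (2 * π))⁻¹
          * (ENNReal.ofReal ((L : ℝ) * (2 * π / n)) * ENNReal.ofReal (2 * π)) :=
          mul_le_mul_right h1 _
      _ = ENNReal.ofReal ((L : ℝ) * (2 * π / n)) := by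
          rw [mul_comm (ENNReal.ofReal ((L : ℝ) * (2 * π / n))), ← mul_assoc,
            ENNReal.inv_mul_cancel (ENNReal.ofReal_pos.mpr h2pi).ne' ENNReal.ofReal_ne_top,
            one_mul]
  have hW : W1 ((n : ℝ≥0∞)⁻¹ • ∑ i ∈ Finset.range n, Measure.dirac (pts i)) μ
      ≤ ∫⁻ p, edist p.1 p.2 ∂pc := by
    rw [W1]
    exact iInf_le_of_le pc (iInf_le_of_le hfst (iInf_le _ hsnd))
  refine le_trans hW (le_trans hint ?_)
  apply ENNReal.ofReal_le_ofReal
  have heq : (L : ℝ) * (2 * π / n) = 2 * π * (L : ℝ) / n := by ring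
  rw [heq]
  gcongr
  linarith
end

section
/- Let n, m be positive integers, z, c ∈ ℂ, and let B be the m × m Jordan block with c on the diagonal and 1 on the superdiagonal. Set A = B − zI. Then for every k with 1 ≤ k ≤ m−1, the k-th largest singular value σ_k(A) satisfies ||c − z| − 1| ≤ σ_k(A) ≤ |c − z| + 1. -/
open Matrix

/-- The `m × m` Jordan block with eigenvalue `c`: `c` on the diagonal, `1` on the
superdiagonal, zeros elsewhere. -/
def jordanBlock (m : ℕ) (c : ℂ) : Matrix (Fin m) (Fin m) ℂ :=
  Matrix.of fun i j => if (j : ℕ) = (i : ℕ) then c else if (j : ℕ) = (i : ℕ) + 1 then 1 else 0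

/-- The singular values of `M` sorted in decreasing order:
`svDesc M ⟨k-1,_⟩` is the `k`-th largest singular value `σ_k(M)`. -/
noncomputable def svDesc {n : ℕ} (M : Matrix (Fin n) (Fin n) ℂ) (j : Fin n) : ℝ :=
  sv M (Tuple.sort (sv M) j.rev)

namespace JordanAux



noncomputable def toE {n : ℕ} (v : Fin n → ℂ) : EuclideanSpace ℂ (Fin n) :=
  (WithLp.equiv 2 _).symm v

@[simp] lemma toE_apply {n : ℕ} (v : Fin n → ℂ) (i : Fin n) : toE v i = v i := rfl

lemma norm_toE_sq {n : ℕ} (v : Fin n → ℂ) : ‖toE v‖ ^ 2 = ∑ i, ‖v i‖ ^ 2 := by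
  rw [EuclideanSpace.norm_eq, Real.sq_sqrt]
  · rfl
  · positivity

def shiftVec {n : ℕ} (v : Fin n → ℂ) : Fin n → ℂ :=
  fun i => if h : (i : ℕ) + 1 < n then v ⟨(i : ℕ) + 1, h⟩ else 0

lemma jordan_mulVec {n : ℕ} (c z : ℂ) (v : Fin n → ℂ) :
    (jordanBlock n c - z • 1) *ᵥ v = (c - z) • v + shiftVec v := by
  funext i
  have : ∀ j : Fin n, ((jordanBlock n c - z • 1) i j) * v j =
      (if j = i then (c - z) * v j else 0) + (if (j : ℕ) = (i : ℕ) + 1 then v j else 0) := by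
    intro j
    simp only [jordanBlock, Matrix.sub_apply, Matrix.smul_apply, Matrix.one_apply, Matrix.of_apply]
    rcases eq_or_ne j i with rfl | hji
    · simp [Fin.ext_iff]
    · have h1 : (j : ℕ) ≠ (i : ℕ) := fun h => hji (Fin.ext h)
      have h2 : i ≠ j := fun h => hji h.symm
      simp only [h1, if_false, hji, h2, smul_zero, sub_zero, ite_mul, one_mul, zero_mul,
        zero_add]
  simp only [Matrix.mulVec, dotProduct, this, Finset.sum_add_distrib,
    Finset.sum_ite_eq' Finset.univ i (fun j => (c - z) * v j), Finset.mem_univ, if_true,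
    Pi.add_apply, Pi.smul_apply, smul_eq_mul]
  congr 1
  · by_cases h : (i : ℕ) + 1 < n
    · rw [Finset.sum_eq_single (⟨(i : ℕ) + 1, h⟩ : Fin n)]
      · simp [shiftVec, h, Pi.add_apply]
      · intro j _ hj
        have : (j : ℕ) ≠ (i : ℕ) + 1 := fun hh => hj (Fin.ext hh)
        simp [this]
      · simp
    · rw [Finset.sum_eq_zero]
      · simp [shiftVec, h, Pi.add_apply]
      · intro j _
        have hj := j.isLt
        have : (j : ℕ) ≠ (i : ℕ) + 1 := by omega
        simp [this]

lemma shift_sum_sq {m' : ℕ} (v : Fin (m' + 1) → ℂ) :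
    ∑ i, ‖shiftVec v i‖ ^ 2 = ∑ i, ‖v i‖ ^ 2 - ‖v 0‖ ^ 2 := by
  rw [Fin.sum_univ_castSucc (f := fun i => ‖shiftVec v i‖ ^ 2),
    Fin.sum_univ_succ (f := fun i => ‖v i‖ ^ 2)]
  have h1 : ∀ i : Fin m', shiftVec v i.castSucc = v i.succ := by
    intro i
    simp only [shiftVec, Fin.coe_castSucc]
    rw [dif_pos (by omega)]
    congr 1
  have h2 : shiftVec v (Fin.last m') = 0 := by
    simp [shiftVec]
  simp only [h1, h2]
  simp

lemma norm_shift_le {m' : ℕ} (v : Fin (m' + 1) → ℂ) : ‖toE (shiftVec v)‖ ≤ ‖toE v‖ := by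
  have h := shift_sum_sq v
  have : ‖toE (shiftVec v)‖ ^ 2 ≤ ‖toE v‖ ^ 2 := by
    rw [norm_toE_sq, norm_toE_sq, h]
    nlinarith [sq_nonneg ‖v 0‖]
  nlinarith [norm_nonneg (toE (shiftVec v)), norm_nonneg (toE v), this]

lemma norm_shift_eq {m' : ℕ} (v : Fin (m' + 1) → ℂ) (hv : v 0 = 0) :
    ‖toE (shiftVec v)‖ = ‖toE v‖ := by
  have h := shift_sum_sq v
  have h2 : ‖toE (shiftVec v)‖ ^ 2 = ‖toE v‖ ^ 2 := by
    rw [norm_toE_sq, norm_toE_sq, h, hv]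
    simp
  nlinarith [norm_nonneg (toE (shiftVec v)), norm_nonneg (toE v), h2]

lemma toE_add_smul {n : ℕ} (a : ℂ) (v w : Fin n → ℂ) :
    toE (a • v + w) = a • toE v + toE w := rfl





open ComplexOrder in
lemma psd_eigenvalues_nonneg {n : ℕ} (A : Matrix (Fin n) (Fin n) ℂ) (i : Fin n) :
    0 ≤ (Matrix.isHermitian_conjTranspose_mul_self A).eigenvalues i :=
  (Matrix.posSemidef_conjTranspose_mul_self A).eigenvalues_nonneg i

lemma mulVec_norm_le {m' : ℕ} (c z : ℂ) (v : Fin (m' + 1) → ℂ) :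
    ‖toE ((jordanBlock (m' + 1) c - z • 1) *ᵥ v)‖ ≤ (‖c - z‖ + 1) * ‖toE v‖ := by
  rw [jordan_mulVec, toE_add_smul]
  have h1 := norm_add_le ((c - z) • toE v) (toE (shiftVec v))
  have h2 : ‖(c - z) • toE v‖ = ‖c - z‖ * ‖toE v‖ := norm_smul _ _
  have h3 := norm_shift_le v
  nlinarith [norm_nonneg (toE v)]

lemma mulVec_norm_ge {m' : ℕ} (c z : ℂ) (v : Fin (m' + 1) → ℂ) (hv : v 0 = 0) :
    |‖c - z‖ - 1| * ‖toE v‖ ≤ ‖toE ((jordanBlock (m' + 1) c - z • 1) *ᵥ v)‖ := by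
  rw [jordan_mulVec, toE_add_smul]
  have h1 : |‖(c - z) • toE v‖ - ‖toE (shiftVec v)‖| ≤ ‖(c - z) • toE v + toE (shiftVec v)‖ := by
    have := abs_norm_sub_norm_le ((c - z) • toE v) (-(toE (shiftVec v)))
    simpa [sub_neg_eq_add] using this
  have h2 : ‖(c - z) • toE v‖ = ‖c - z‖ * ‖toE v‖ := norm_smul _ _
  rw [norm_shift_eq v hv, h2] at h1
  calc |‖c - z‖ - 1| * ‖toE v‖ = |(‖c - z‖ - 1) * ‖toE v‖| := by
        rw [abs_mul, abs_of_nonneg (norm_nonneg _)]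
    _ = |‖c - z‖ * ‖toE v‖ - ‖toE v‖| := by ring_nf
    _ ≤ _ := h1



section
variable {n : ℕ} (A : Matrix (Fin n) (Fin n) ℂ)

lemma inner_mulVec_self (v : Fin n → ℂ) :
    inner (𝕜 := ℂ) (toE v) (toE ((Aᴴ * A) *ᵥ v)) = (‖toE (A *ᵥ v)‖ : ℂ) ^ 2 := by
  rw [EuclideanSpace.inner_eq_star_dotProduct]
  show ((Aᴴ * A) *ᵥ v) ⬝ᵥ star v = _
  rw [dotProduct_comm, ← Matrix.mulVec_mulVec, Matrix.dotProduct_mulVec, ← Matrix.star_mulVec,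
    dotProduct_comm]
  have := inner_self_eq_norm_sq_to_K (𝕜 := ℂ) (toE (A *ᵥ v))
  rw [EuclideanSpace.inner_eq_star_dotProduct] at this
  exact this

noncomputable def ev (i : Fin n) : Fin n → ℂ :=
  (WithLp.equiv 2 _) ((Matrix.isHermitian_conjTranspose_mul_self A).eigenvectorBasis i)

lemma toE_ev (i : Fin n) :
    toE (ev A i) = (Matrix.isHermitian_conjTranspose_mul_self A).eigenvectorBasis i := rfl

lemma mulVec_ev (i : Fin n) :
    (Aᴴ * A) *ᵥ ev A i = (Matrix.isHermitian_conjTranspose_mul_self A).eigenvalues i • ev A i :=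
  (Matrix.isHermitian_conjTranspose_mul_self A).mulVec_eigenvectorBasis i

lemma inner_combo (i j : Fin n) (hij : i ≠ j) (α β γ δ : ℂ) :
    inner (𝕜 := ℂ) (α • toE (ev A i) + β • toE (ev A j))
        (γ • toE (ev A i) + δ • toE (ev A j)) =
      (starRingEnd ℂ) α * γ + (starRingEnd ℂ) β * δ := by
  have hB := orthonormal_iff_ite.mp
    ((Matrix.isHermitian_conjTranspose_mul_self A).eigenvectorBasis).orthonormal
  simp only [toE_ev, inner_add_left, inner_add_right, inner_smul_left, inner_smul_right, hB,
    if_pos rfl, if_neg hij, if_neg hij.symm]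
  simp
  ring

lemma toE_combo (α β : ℂ) (i j : Fin n) :
    toE (α • ev A i + β • ev A j) = α • toE (ev A i) + β • toE (ev A j) := rfl

lemma norm_A_combo (i j : Fin n) (hij : i ≠ j) (α β : ℂ) :
    ‖toE (A *ᵥ (α • ev A i + β • ev A j))‖ ^ 2 =
      (Matrix.isHermitian_conjTranspose_mul_self A).eigenvalues i * ‖α‖ ^ 2 +
        (Matrix.isHermitian_conjTranspose_mul_self A).eigenvalues j * ‖β‖ ^ 2 := by
  set μ := (Matrix.isHermitian_conjTranspose_mul_self A).eigenvalues
  have h1 := inner_mulVec_self A (α • ev A i + β • ev A j)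
  have h2 : (Aᴴ * A) *ᵥ (α • ev A i + β • ev A j) =
      ((μ i : ℂ) * α) • ev A i + ((μ j : ℂ) * β) • ev A j := by
    rw [Matrix.mulVec_add, Matrix.mulVec_smul, Matrix.mulVec_smul, mulVec_ev, mulVec_ev]
    funext x
    simp [Pi.smul_apply, smul_eq_mul]
    ring
  rw [h2] at h1
  rw [toE_combo, toE_combo] at h1
  rw [inner_combo A i j hij] at h1
  have cα : (starRingEnd ℂ) α * α = (‖α‖ : ℂ) ^ 2 := RCLike.conj_mul α
  have cβ : (starRingEnd ℂ) β * β = (‖β‖ : ℂ) ^ 2 := RCLike.conj_mul β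
  have h3 : ((‖toE (A *ᵥ (α • ev A i + β • ev A j))‖ ^ 2 : ℝ) : ℂ) =
      ((μ i * ‖α‖ ^ 2 + μ j * ‖β‖ ^ 2 : ℝ) : ℂ) := by
    push_cast
    rw [← h1]
    linear_combination ((μ i : ℂ)) * cα + ((μ j : ℂ)) * cβ
  exact_mod_cast h3

lemma norm_combo (i j : Fin n) (hij : i ≠ j) (α β : ℂ) :
    ‖toE (α • ev A i + β • ev A j)‖ ^ 2 = ‖α‖ ^ 2 + ‖β‖ ^ 2 := by
  have h1 := inner_self_eq_norm_sq_to_K (𝕜 := ℂ) (α • toE (ev A i) + β • toE (ev A j))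
  rw [inner_combo A i j hij, RCLike.conj_mul α, RCLike.conj_mul β] at h1
  rw [show toE (α • ev A i + β • ev A j) = α • toE (ev A i) + β • toE (ev A j) from rfl]
  exact_mod_cast h1.symm
end

end JordanAux


open JordanAux

/-- **All but the smallest singular value of a shifted Jordan block are of constant size**:
for `A = B − zI` with `B` the `m × m` Jordan block with eigenvalue `c`, and `1 ≤ k ≤ m − 1`,
`||c − z| − 1| ≤ σ_k(A) ≤ |c − z| + 1`. -/
theorem jordan_block_singular_values (m : ℕ) (hm : 0 < m) (z c : ℂ)
    (k : ℕ) (hk1 : 1 ≤ k) (hk2 : k ≤ m - 1) :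
    |‖c - z‖ - 1| ≤ svDesc (jordanBlock m c - z • 1) ⟨k - 1, by omega⟩ ∧
      svDesc (jordanBlock m c - z • 1) ⟨k - 1, by omega⟩ ≤ ‖c - z‖ + 1 := by
  obtain ⟨m'', rfl⟩ : ∃ m'', m = m'' + 2 := ⟨m - 2, by omega⟩
  set n := m'' + 2 with hn
  set A : Matrix (Fin n) (Fin n) ℂ := jordanBlock n c - z • 1 with hA
  have hμ0 : ∀ i, 0 ≤ (Matrix.isHermitian_conjTranspose_mul_self A).eigenvalues i := fun i =>
    psd_eigenvalues_nonneg A i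
  set μ := (Matrix.isHermitian_conjTranspose_mul_self A).eigenvalues with hμ
  have hsv : ∀ i, sv A i = Real.sqrt (μ i) := fun i => rfl
  have hevnorm : ∀ i, ‖toE (ev A i)‖ = 1 := fun i =>
    (Matrix.isHermitian_conjTranspose_mul_self A).eigenvectorBasis.orthonormal.1 i
  -- upper bound for every singular value
  have upper : ∀ i, sv A i ≤ ‖c - z‖ + 1 := by
    intro i
    have h01 : ∃ j : Fin n, i ≠ j := by
      by_cases h : i = 0
      · exact ⟨1, by simp [h, Fin.ext_iff]⟩
      · exact ⟨0, fun hh => h hh⟩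
    obtain ⟨j, hij⟩ := h01
    have key := norm_A_combo A i j hij 1 0
    simp only [one_smul, zero_smul, add_zero, norm_one, norm_zero] at key
    have hb : ‖toE (A *ᵥ ev A i)‖ ≤ (‖c - z‖ + 1) * ‖toE (ev A i)‖ :=
      mulVec_norm_le (m' := m'' + 1) c z (ev A i)
    rw [hevnorm i, mul_one] at hb
    have hμle : μ i ≤ (‖c - z‖ + 1) ^ 2 := by
      have := key
      nlinarith [norm_nonneg (toE (A *ᵥ ev A i)), norm_nonneg (c - z)]
    rw [hsv]
    calc Real.sqrt (μ i) ≤ Real.sqrt ((‖c - z‖ + 1) ^ 2) := Real.sqrt_le_sqrt hμle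
      _ = ‖c - z‖ + 1 := Real.sqrt_sq (by positivity)
  -- at most one singular value below |‖a‖ - 1|
  have small : ∀ i j : Fin n, i ≠ j → sv A i < |‖c - z‖ - 1| → sv A j < |‖c - z‖ - 1| → False := by
    intro i j hij hi hj
    set b := |‖c - z‖ - 1| with hb
    have hμi : μ i < b ^ 2 := by
      have := Real.sq_sqrt (hμ0 i)
      nlinarith [Real.sqrt_nonneg (μ i), hi, hsv i]
    have hμj : μ j < b ^ 2 := by
      have := Real.sq_sqrt (hμ0 j)
      nlinarith [Real.sqrt_nonneg (μ j), hj, hsv j]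
    obtain ⟨α, β, hne, h0⟩ : ∃ α β : ℂ, (0 < ‖α‖ ^ 2 + ‖β‖ ^ 2) ∧
        (α • ev A i + β • ev A j) 0 = 0 := by
      by_cases h : ev A i 0 = 0
      · exact ⟨1, 0, by norm_num, by simp [Pi.add_apply, Pi.smul_apply, h]⟩
      · refine ⟨ev A j 0, -(ev A i 0), ?_, ?_⟩
        · have h1 : 0 < ‖-(ev A i 0)‖ ^ 2 := by
            have := norm_pos_iff.mpr h
            rw [norm_neg]; positivity
          nlinarith [sq_nonneg ‖ev A j 0‖]
        · simp only [Pi.add_apply, Pi.smul_apply, smul_eq_mul]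
          ring
    have hge : |‖c - z‖ - 1| * ‖toE (α • ev A i + β • ev A j)‖ ≤
        ‖toE (A *ᵥ (α • ev A i + β • ev A j))‖ :=
      mulVec_norm_ge (m' := m'' + 1) c z (α • ev A i + β • ev A j) h0
    have h1 : ‖toE (A *ᵥ (α • ev A i + β • ev A j))‖ ^ 2 = μ i * ‖α‖ ^ 2 + μ j * ‖β‖ ^ 2 :=
      norm_A_combo A i j hij α β
    have h2 : ‖toE (α • ev A i + β • ev A j)‖ ^ 2 = ‖α‖ ^ 2 + ‖β‖ ^ 2 :=
      norm_combo A i j hij α β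
    have e0 : (|‖c - z‖ - 1| * ‖toE (α • ev A i + β • ev A j)‖) ^ 2 ≤
        ‖toE (A *ᵥ (α • ev A i + β • ev A j))‖ ^ 2 :=
      pow_le_pow_left₀ (by positivity) hge 2
    have e1 : |‖c - z‖ - 1| ^ 2 * (‖α‖ ^ 2 + ‖β‖ ^ 2) ≤ μ i * ‖α‖ ^ 2 + μ j * ‖β‖ ^ 2 := by
      calc |‖c - z‖ - 1| ^ 2 * (‖α‖ ^ 2 + ‖β‖ ^ 2)
          = (|‖c - z‖ - 1| * ‖toE (α • ev A i + β • ev A j)‖) ^ 2 := by rw [mul_pow, h2]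
        _ ≤ ‖toE (A *ᵥ (α • ev A i + β • ev A j))‖ ^ 2 := e0
        _ = _ := h1
    have hbb : b ^ 2 = |‖c - z‖ - 1| ^ 2 := by rw [hb]
    rw [hbb] at hμi hμj
    by_cases hp : ‖α‖ ^ 2 = 0
    · nlinarith [e1, hμj, hne, hp]
    · have hp' : 0 < ‖α‖ ^ 2 := lt_of_le_of_ne (sq_nonneg _) (Ne.symm hp)
      nlinarith [e1, hμi, hμj, hp', sq_nonneg ‖β‖]
  -- sorting
  have hmono := Tuple.monotone_sort (sv A)
  set σ := Tuple.sort (sv A) with hσ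
  have hgoal : ∀ j : Fin n, svDesc A j = sv A (σ j.rev) := fun j => rfl
  constructor
  · by_contra h
    push_neg at h
    rw [hgoal] at h
    have hrev : (Fin.rev (⟨k - 1, by omega⟩ : Fin n)) = ⟨n - k, by omega⟩ := by
      apply Fin.ext
      rw [Fin.val_rev]
      simp only []
      omega
    rw [hrev] at h
    have h1t : (⟨1, by omega⟩ : Fin n) ≤ ⟨n - k, by omega⟩ := by
      rw [Fin.mk_le_mk]; omega
    have h01 : (⟨0, by omega⟩ : Fin n) ≤ ⟨1, by omega⟩ := by
      rw [Fin.mk_le_mk]; omega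
    have hg1 : sv A (σ ⟨1, by omega⟩) ≤ sv A (σ ⟨n - k, by omega⟩) := hmono h1t
    have hg0 : sv A (σ ⟨0, by omega⟩) ≤ sv A (σ ⟨1, by omega⟩) := hmono h01
    have hne : σ ⟨0, by omega⟩ ≠ σ ⟨1, by omega⟩ := by
      intro hc
      have := σ.injective hc
      rw [Fin.mk.injEq] at this
      omega
    exact small _ _ hne (lt_of_le_of_lt (hg0.trans hg1) h) (lt_of_le_of_lt hg1 h)
  · rw [hgoal]
    exact upper _
end

section
/- Let m be a positive integer, z, c ∈ ℂ with |c − z| > 1, and let B be the m × m Jordan block with eigenvalue c. Then every singular value of A = B − zI is at least min{|c − z| − 1, √(|c − z|² − |c − z|)}. -/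
open Matrix

/- Auxiliary lemmas -/

lemma jordanBlock_decomp (m : ℕ) (c z : ℂ) :
    jordanBlock m c - z • 1 = (c - z) • (1 : Matrix (Fin m) (Fin m) ℂ) + jordanBlock m 0 := by
  ext i j
  simp only [Matrix.sub_apply, Matrix.add_apply, Matrix.smul_apply, one_apply, jordanBlock, of_apply, smul_eq_mul]
  by_cases h1 : (j : ℕ) = (i : ℕ)
  · have : i = j := (Fin.val_inj.mp h1).symm
    simp [this, h1]
  · have : ¬ i = j := fun hh => h1 (by rw [hh])
    by_cases h2 : (j : ℕ) = (i : ℕ) + 1 <;> simp [h1, h2, this]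

lemma shift_mulVec_of_lt (m : ℕ) (x : Fin m → ℂ) (i : Fin m) (h : (i : ℕ) + 1 < m) :
    (jordanBlock m 0 *ᵥ x) i = x ⟨(i : ℕ) + 1, h⟩ := by
  unfold jordanBlock mulVec dotProduct
  rw [Finset.sum_eq_single (⟨(i : ℕ) + 1, h⟩ : Fin m)]
  · simp
  · intro j _ hj
    have : ¬ (j : ℕ) = (i : ℕ) + 1 := fun hh => hj (Fin.ext hh)
    simp only [of_apply]
    split_ifs <;> simp_all
  · simp

lemma shift_mulVec_of_ge (m : ℕ) (x : Fin m → ℂ) (i : Fin m) (h : ¬ ((i : ℕ) + 1 < m)) :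
    (jordanBlock m 0 *ᵥ x) i = 0 := by
  unfold jordanBlock mulVec dotProduct
  apply Finset.sum_eq_zero
  intro j _
  have h1 : ¬ (j : ℕ) = (i : ℕ) + 1 := fun hh => h (hh ▸ j.isLt)
  simp only [of_apply]
  split_ifs <;> simp_all

lemma fin_val_add_one (m : ℕ) [NeZero m] (i : Fin m) (h : (i : ℕ) + 1 < m) :
    ((i + 1 : Fin m) : ℕ) = (i : ℕ) + 1 := by
  have h1 : ((1 : Fin m) : ℕ) = 1 % m := Fin.val_one' m
  have hm2 : 1 % m = 1 := Nat.mod_eq_of_lt (by omega)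
  rw [Fin.val_add, h1, hm2, Nat.mod_eq_of_lt h]

lemma star_dot_self_s15 (m : ℕ) (y : Fin m → ℂ) :
    star y ⬝ᵥ y = ((∑ j, ‖y j‖ ^ 2 : ℝ) : ℂ) := by
  unfold dotProduct
  push_cast
  refine Finset.sum_congr rfl fun j _ => ?_
  simp [Pi.star_apply, RCLike.star_def, Complex.conj_mul', Complex.sq_norm]

lemma shift_sum_le (m : ℕ) [NeZero m] (x : Fin m → ℂ) :
    ∑ k, ‖(jordanBlock m 0 *ᵥ x) k‖ ^ 2 ≤ ∑ k, ‖x k‖ ^ 2 := by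
  have hpt : ∀ k : Fin m, ‖(jordanBlock m 0 *ᵥ x) k‖ ^ 2 ≤ ‖x (k + 1)‖ ^ 2 := by
    intro k
    by_cases hk : (k : ℕ) + 1 < m
    · rw [shift_mulVec_of_lt m x k hk]
      have : (⟨(k : ℕ) + 1, hk⟩ : Fin m) = k + 1 := Fin.ext (fin_val_add_one m k hk).symm
      rw [this]
    · rw [shift_mulVec_of_ge m x k hk]
      simp
  calc ∑ k, ‖(jordanBlock m 0 *ᵥ x) k‖ ^ 2 ≤ ∑ k, ‖x (k + 1)‖ ^ 2 :=
        Finset.sum_le_sum fun k _ => hpt k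
    _ = ∑ k, ‖x k‖ ^ 2 := Fintype.sum_equiv (Equiv.addRight (1 : Fin m))
        (fun k => ‖x (k + 1)‖ ^ 2) (fun k => ‖x k‖ ^ 2) (fun k => rfl)

/-- **Singular value lower bound for a shifted Jordan block in the exterior regime**:
for `|c − z| > 1` and `A = B − zI`, every singular value of `A` is at least
`min{|c − z| − 1, √(|c − z|² − |c − z|)}`. -/
theorem jordan_block_singular_value_lower_bound (m : ℕ) (hm : 0 < m) (z c : ℂ)
    (h : 1 < ‖c - z‖) :
    ∀ i : Fin m,
      min (‖c - z‖ - 1)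
          (Real.sqrt (‖c - z‖ ^ 2 - ‖c - z‖)) ≤
        sv (jordanBlock m c - z • 1) i := by
  intro i
  have : NeZero m := ⟨hm.ne'⟩
  set δ := ‖c - z‖ with hδdef
  have hmin : min (δ - 1) (Real.sqrt (δ ^ 2 - δ)) = δ - 1 := by
    refine min_eq_left ?_
    have h2 : (δ - 1) ^ 2 ≤ δ ^ 2 - δ := by nlinarith
    calc δ - 1 = Real.sqrt ((δ - 1) ^ 2) := (Real.sqrt_sq (by linarith)).symm
      _ ≤ Real.sqrt (δ ^ 2 - δ) := Real.sqrt_le_sqrt h2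
  rw [hmin]
  set A := jordanBlock m c - z • 1 with hAdef
  set hM := Matrix.isHermitian_conjTranspose_mul_self A with hMdef
  show δ - 1 ≤ Real.sqrt (hM.eigenvalues i)
  set lam := hM.eigenvalues i with hlamdef
  have hlam0 : 0 ≤ lam := Matrix.eigenvalues_conjTranspose_mul_self_nonneg A i
  set V : EuclideanSpace ℂ (Fin m) := hM.eigenvectorBasis i with hVdef
  set x : Fin m → ℂ := (WithLp.equiv 2 (Fin m → ℂ)) V with hxdef
  have hmv : (Aᴴ * A) *ᵥ x = lam • x := hM.mulVec_eigenvectorBasis i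
  have hVnorm : ‖V‖ = 1 := hM.eigenvectorBasis.orthonormal.1 i
  have hsum1 : ∑ j, ‖x j‖ ^ 2 = 1 := by
    have hn : Real.sqrt (∑ j, ‖x j‖ ^ 2) = 1 := by
      rw [show (∑ j, ‖x j‖ ^ 2) = ∑ j, ‖V j‖ ^ 2 from rfl, ← EuclideanSpace.norm_eq V]
      exact hVnorm
    have h1 := Real.sq_sqrt (Finset.sum_nonneg fun j (_ : j ∈ Finset.univ) => sq_nonneg ‖x j‖)
    rw [← h1, hn]; norm_num
  have hdot : ((∑ j, ‖(A *ᵥ x) j‖ ^ 2 : ℝ) : ℂ) = ((lam : ℝ) : ℂ) := by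
    have e1 : star (A *ᵥ x) ⬝ᵥ (A *ᵥ x) = star x ⬝ᵥ ((Aᴴ * A) *ᵥ x) := by
      rw [star_mulVec, dotProduct_mulVec, dotProduct_mulVec, vecMul_vecMul]
    rw [hmv, dotProduct_smul, star_dot_self_s15, star_dot_self_s15, hsum1] at e1
    simpa [Complex.real_smul] using e1
  have hS : ∑ j, ‖(A *ᵥ x) j‖ ^ 2 = lam := by exact_mod_cast hdot
  set toE := (WithLp.equiv 2 (Fin m → ℂ)).symm with htoEdef
  have hnorm2 : ‖toE (A *ᵥ x)‖ = Real.sqrt lam := by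
    rw [EuclideanSpace.norm_eq,
      show (∑ k, ‖toE (A *ᵥ x) k‖ ^ 2) = ∑ k, ‖(A *ᵥ x) k‖ ^ 2 from rfl, hS]
  have hNle : ‖toE (jordanBlock m 0 *ᵥ x)‖ ≤ 1 := by
    rw [EuclideanSpace.norm_eq]
    calc Real.sqrt (∑ k, ‖toE (jordanBlock m 0 *ᵥ x) k‖ ^ 2)
        ≤ Real.sqrt (∑ k, ‖x k‖ ^ 2) := Real.sqrt_le_sqrt (shift_sum_le m x)
      _ = 1 := by rw [hsum1]; exact Real.sqrt_one
  have hAx : A *ᵥ x = (c - z) • x + jordanBlock m 0 *ᵥ x := by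
    rw [hAdef, jordanBlock_decomp, add_mulVec, smul_mulVec, one_mulVec]
  have hE : toE (A *ᵥ x) = (c - z) • V + toE (jordanBlock m 0 *ᵥ x) := by
    rw [hAx]; rfl
  have hsmul : ‖(c - z) • V‖ = δ := by
    rw [norm_smul, hVnorm, mul_one]
  have htri : δ - 1 ≤ ‖toE (A *ᵥ x)‖ := by
    rw [hE]
    have h2 : ‖(c - z) • V‖ ≤ ‖(c - z) • V + toE (jordanBlock m 0 *ᵥ x)‖ +
        ‖toE (jordanBlock m 0 *ᵥ x)‖ := by
      simpa using norm_add_le ((c - z) • V + toE (jordanBlock m 0 *ᵥ x))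
        (-(toE (jordanBlock m 0 *ᵥ x)))
    rw [hsmul] at h2
    linarith
  rw [← hnorm2]
  exact htri
end

section
/- Let m be a positive integer, z, c ∈ ℂ with |z − c| < 1, and ε > 0 with 2|z − c|^m < ε. Let B be the m × m Jordan block with eigenvalue c, and let E be the m × m matrix with (m,1) entry ε and all other entries zero. Then the smallest singular value of A = B − zI + E satisfies σ_m(A) ≥ ε(1 − |z − c|)^{3/2} / √(2mε² + 8). -/
set_option maxHeartbeats 1000000


open Matrix Finset

lemma sMin_ge {n : ℕ} [NeZero n] (M : Matrix (Fin n) (Fin n) ℂ) (b : ℝ) (hb : 0 ≤ b)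
    (h : ∀ x : Fin n → ℂ, b ^ 2 * ∑ i, ‖x i‖ ^ 2
        ≤ ∑ i, ‖M.mulVec x i‖ ^ 2) : b ≤ sMin M := by
  have hH := Matrix.isHermitian_conjTranspose_mul_self M
  apply le_ciInf
  intro i
  set v : Fin n → ℂ := ⇑(hH.eigenvectorBasis i) with hv
  have hnorm : ∑ j, ‖v j‖ ^ 2 = 1 := by
    have h1 : ‖hH.eigenvectorBasis i‖ = 1 := hH.eigenvectorBasis.orthonormal.1 i
    have := EuclideanSpace.norm_eq (hH.eigenvectorBasis i)
    rw [h1] at this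
    have h2 : (0:ℝ) ≤ ∑ j, ‖(hH.eigenvectorBasis i) j‖ ^ 2 :=
      Finset.sum_nonneg fun j _ => sq_nonneg _
    have := Real.sqrt_eq_one.mp this.symm
    simpa using this
  have heig : hH.eigenvalues i = ∑ j, ‖M.mulVec v j‖ ^ 2 := by
    rw [hH.eigenvalues_eq]
    have : star v ⬝ᵥ (Mᴴ * M) *ᵥ v = star (M *ᵥ v) ⬝ᵥ (M *ᵥ v) := by
      rw [← Matrix.mulVec_mulVec, Matrix.star_mulVec, dotProduct_mulVec]
    rw [this]
    simp only [dotProduct, Pi.star_apply, map_sum]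
    refine Finset.sum_congr rfl fun j _ => ?_
    rw [← Complex.normSq_eq_norm_sq]
    have : star ((M *ᵥ v) j) * (M *ᵥ v) j = (Complex.normSq ((M *ᵥ v) j) : ℂ) := by
      rw [Complex.star_def, Complex.normSq_eq_conj_mul_self]
    rw [this]
    simp
  have : b ^ 2 ≤ hH.eigenvalues i := by
    have := h v
    rw [hnorm, mul_one] at this
    rw [heig]; exact this
  calc b = Real.sqrt (b ^ 2) := by rw [Real.sqrt_sq hb]
  _ ≤ sv M i := Real.sqrt_le_sqrt this

lemma sum_ite_coe {m : ℕ} (a : ℕ) (f : Fin m → ℂ) :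
    (∑ j : Fin m, if (j : ℕ) = a then f j else 0) = if h : a < m then f ⟨a, h⟩ else 0 := by
  split_ifs with h
  · rw [Finset.sum_eq_single_of_mem (⟨a, h⟩ : Fin m) (Finset.mem_univ _)]
    · simp
    · intro j _ hj
      rw [if_neg]
      intro hja
      exact hj (Fin.ext hja)
  · apply Finset.sum_eq_zero
    intro j _
    rw [if_neg]
    intro hja
    exact h (hja ▸ j.isLt)

lemma key_ineq (m : ℕ) (hm : 0 < m) (w : ℂ) (ε : ℝ) (hε : 0 < ε)
    (hr : ‖w‖ < 1) (h2 : 2 * ‖w‖ ^ m < ε) (X Y : ℕ → ℂ)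
    (hX : ∀ k, m ≤ k → X k = 0)
    (hrec : ∀ k < m, Y k = w * X k + X (k + 1) + (if k = m - 1 then (ε : ℂ) * X 0 else 0)) :
    ε ^ 2 * (1 - ‖w‖) ^ 3 * ∑ k ∈ range m, ‖X k‖ ^ 2 ≤
      (2 * m * ε ^ 2 + 8) * ∑ k ∈ range m, ‖Y k‖ ^ 2 := by
  set r := ‖w‖ with hrdef
  have hr0 : 0 ≤ r := norm_nonneg w
  have hq1 : r ^ 2 < 1 := by nlinarith
  have hq0 : (0:ℝ) < 1 - r ^ 2 := by linarith
  set S := ∑ k ∈ range m, ‖Y k‖ ^ 2 with hSdef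
  set T := ∑ k ∈ range m, ‖X k‖ ^ 2 with hTdef
  have hS0 : 0 ≤ S := Finset.sum_nonneg fun k _ => sq_nonneg _
  have hT0 : 0 ≤ T := Finset.sum_nonneg fun k _ => sq_nonneg _
  set C : ℝ := 1 / (1 - r ^ 2) with hCdef
  have hC0 : 0 < C := by positivity
  have geom : ∀ k : ℕ, ∑ t ∈ range k, (r ^ 2) ^ t ≤ C := by
    intro k
    rw [hCdef, le_div_iff₀ hq0]
    nlinarith [geom_sum_mul (r ^ 2) k, pow_nonneg (sq_nonneg r) k]
  -- the solved recurrence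
  have formula : ∀ k, k < m → X k = (-w) ^ k * X 0 + ∑ j ∈ range k, (-w) ^ (k - 1 - j) * Y j := by
    intro k
    induction k with
    | zero => simp
    | succ k ih =>
      intro hk1
      have hk : k < m := lt_trans (Nat.lt_succ_self k) hk1
      have hkm : k ≠ m - 1 := by omega
      have hy := hrec k hk
      rw [if_neg hkm, add_zero] at hy
      have hx1 : X (k + 1) = Y k - w * X k := by rw [hy]; ring
      rw [hx1, ih hk]
      simp only [Nat.add_sub_cancel]
      rw [Finset.sum_range_succ, Nat.sub_self, pow_zero, one_mul]
      have hsum : ∑ j ∈ range k, (-w) ^ (k - j) * Y j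
          = ∑ j ∈ range k, (-w) * ((-w) ^ (k - 1 - j) * Y j) := by
        refine Finset.sum_congr rfl fun j hj => ?_
        have hjk := Finset.mem_range.mp hj
        rw [show k - j = (k - 1 - j) + 1 by omega, pow_succ]
        ring
      rw [hsum, ← Finset.mul_sum, pow_succ]
      ring
  -- the corner identity
  have corner : ((ε : ℂ) - (-w) ^ m) * X 0 = ∑ j ∈ range m, (-w) ^ (m - 1 - j) * Y j := by
    obtain ⟨n, rfl⟩ : ∃ n, m = n + 1 := ⟨m - 1, by omega⟩
    simp only [Nat.add_sub_cancel]
    have hy := hrec n (by omega)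
    rw [if_pos (by omega), hX (n + 1) le_rfl, add_zero] at hy
    have hf := formula n (by omega)
    have hsum : ∑ j ∈ range n, (-w) ^ (n - j) * Y j
        = ∑ j ∈ range n, (-w) * ((-w) ^ (n - 1 - j) * Y j) := by
      refine Finset.sum_congr rfl fun j hj => ?_
      have hjk := Finset.mem_range.mp hj
      rw [show n - j = (n - 1 - j) + 1 by omega, pow_succ]
      ring
    rw [Finset.sum_range_succ, Nat.sub_self, pow_zero, one_mul, hsum, ← Finset.mul_sum, hy, hf,
      pow_succ]
    ring
  -- Cauchy–Schwarz bound on partial sums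
  have csb : ∀ k, k ≤ m → ‖∑ j ∈ range k, (-w) ^ (k - 1 - j) * Y j‖ ^ 2 ≤ C * S := by
    intro k hk
    have h1 : ‖∑ j ∈ range k, (-w) ^ (k - 1 - j) * Y j‖
        ≤ ∑ j ∈ range k, r ^ (k - 1 - j) * ‖Y j‖ := by
      refine le_trans (norm_sum_le _ _) (le_of_eq ?_)
      refine Finset.sum_congr rfl fun j _ => ?_
      rw [norm_mul, norm_pow, norm_neg]
    have h2' : (∑ j ∈ range k, r ^ (k - 1 - j) * ‖Y j‖) ^ 2
        ≤ (∑ j ∈ range k, (r ^ (k - 1 - j)) ^ 2) * ∑ j ∈ range k, ‖Y j‖ ^ 2 :=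
      Finset.sum_mul_sq_le_sq_mul_sq _ _ _
    have h3 : ∑ j ∈ range k, (r ^ (k - 1 - j)) ^ 2 ≤ C := by
      have he : ∀ j ∈ range k, (r ^ (k - 1 - j)) ^ 2 = (r ^ 2) ^ (k - 1 - j) := by
        intro j _; rw [← pow_mul, ← pow_mul, mul_comm]
      rw [Finset.sum_congr rfl he, Finset.sum_range_reflect]
      exact geom k
    have h4 : ∑ j ∈ range k, ‖Y j‖ ^ 2 ≤ S :=
      Finset.sum_le_sum_of_subset_of_nonneg (Finset.range_subset_range.mpr hk)
        (fun j _ _ => sq_nonneg _)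
    have habs0 : (0:ℝ) ≤ ‖∑ j ∈ range k, (-w) ^ (k - 1 - j) * Y j‖ :=
      norm_nonneg _
    have hsum0 : (0:ℝ) ≤ ∑ j ∈ range k, (r ^ (k - 1 - j)) ^ 2 :=
      Finset.sum_nonneg fun j _ => sq_nonneg _
    have hY0 : (0:ℝ) ≤ ∑ j ∈ range k, ‖Y j‖ ^ 2 :=
      Finset.sum_nonneg fun j _ => sq_nonneg _
    nlinarith [pow_le_pow_left₀ habs0 h1 2]
  -- bound on X 0
  have hx0 : (ε / 2) ^ 2 * ‖X 0‖ ^ 2 ≤ C * S := by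
    have hlow : ε / 2 ≤ ‖(ε : ℂ) - (-w) ^ m‖ := by
      have htri : ‖(ε:ℂ)‖ ≤ ‖(ε:ℂ) - (-w) ^ m‖ + ‖(-w) ^ m‖ := by
        calc ‖(ε:ℂ)‖ = ‖((ε:ℂ) - (-w) ^ m) + (-w) ^ m‖ := by ring_nf
        _ ≤ _ := norm_add_le _ _
      have habs1 : ‖(-w) ^ m‖ = r ^ m := by rw [norm_pow, norm_neg]
      have habs2 : ‖(ε:ℂ)‖ = ε := by
        rw [Complex.norm_of_nonneg hε.le]
      rw [habs1, habs2] at htri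
      linarith
    have hcs := csb m le_rfl
    rw [← corner, norm_mul, mul_pow] at hcs
    have h5 : (ε / 2) ^ 2 ≤ ‖(ε : ℂ) - (-w) ^ m‖ ^ 2 :=
      pow_le_pow_left₀ (by positivity) hlow 2
    nlinarith [mul_le_mul_of_nonneg_right h5 (sq_nonneg (‖X 0‖))]
  -- per-index bound
  have hper : ∀ k, k < m →
      ‖X k‖ ^ 2 ≤ 2 * (r ^ 2) ^ k * ‖X 0‖ ^ 2 + 2 * (C * S) := by
    intro k hk
    have hf := formula k hk
    have h1 : ‖X k‖ ≤ r ^ k * ‖X 0‖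
        + ‖∑ j ∈ range k, (-w) ^ (k - 1 - j) * Y j‖ := by
      rw [hf]
      refine le_trans (norm_add_le _ _) ?_
      rw [norm_mul, norm_pow, norm_neg]
    have hcs := csb k hk.le
    have ha : (0:ℝ) ≤ r ^ k * ‖X 0‖ := by positivity
    have hb : (0:ℝ) ≤ ‖∑ j ∈ range k, (-w) ^ (k - 1 - j) * Y j‖ :=
      norm_nonneg _
    have hrk : (r ^ k) ^ 2 = (r ^ 2) ^ k := by rw [← pow_mul, ← pow_mul, mul_comm]
    nlinarith [pow_le_pow_left₀ (norm_nonneg (X k)) h1 2, sq_nonneg (r ^ k * ‖X 0‖ - ‖∑ j ∈ range k, (-w) ^ (k - 1 - j) * Y j‖)]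
  -- summing up
  have hTbound : T ≤ 2 * C * ‖X 0‖ ^ 2 + 2 * m * (C * S) := by
    have h1 : T ≤ ∑ k ∈ range m, (2 * (r ^ 2) ^ k * ‖X 0‖ ^ 2 + 2 * (C * S)) :=
      Finset.sum_le_sum fun k hk => hper k (Finset.mem_range.mp hk)
    have h2' : ∑ k ∈ range m, (2 * (r ^ 2) ^ k * ‖X 0‖ ^ 2 + 2 * (C * S))
        = 2 * (∑ k ∈ range m, (r ^ 2) ^ k) * ‖X 0‖ ^ 2 + 2 * m * (C * S) := by
      rw [Finset.sum_add_distrib, Finset.sum_const, Finset.card_range]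
      rw [← Finset.sum_mul, ← Finset.mul_sum]
      ring
    rw [h2'] at h1
    have h3 : (∑ k ∈ range m, (r ^ 2) ^ k) ≤ C := geom m
    have hX00 : (0:ℝ) ≤ ‖X 0‖ ^ 2 := sq_nonneg _
    nlinarith
  -- final arithmetic
  have h1r : (0:ℝ) < 1 - r := by linarith
  have hx0m : ‖X 0‖ ^ 2 * ε ^ 2 ≤ 4 * (C * S) := by nlinarith [hx0]
  have hTb2 : T * ε ^ 2 ≤ 8 * C ^ 2 * S + 2 * m * (C * S) * ε ^ 2 := by
    have ha := mul_le_mul_of_nonneg_right hTbound (sq_nonneg ε)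
    have hb := mul_le_mul_of_nonneg_left hx0m (by positivity : (0:ℝ) ≤ 2 * C)
    nlinarith
  have hg1 : C * (1 - r) ≤ 1 := by
    rw [hCdef, div_mul_eq_mul_div, one_mul, div_le_one hq0]
    nlinarith
  have hg0 : 0 ≤ C * (1 - r) := mul_nonneg hC0.le h1r.le
  have hm0 : (0:ℝ) ≤ 2 * m * ε ^ 2 := by positivity
  have step1 : ε ^ 2 * (1 - r) ^ 3 * T ≤ (1 - r) ^ 3 * (8 * C ^ 2 * S + 2 * m * (C * S) * ε ^ 2) := by
    calc ε ^ 2 * (1 - r) ^ 3 * T = (1 - r) ^ 3 * (T * ε ^ 2) := by ring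
    _ ≤ _ := mul_le_mul_of_nonneg_left hTb2 (pow_nonneg h1r.le 3)
  have hgg1 : (C * (1 - r)) ^ 2 * (1 - r) ≤ 1 := by nlinarith
  have hgg2 : (C * (1 - r)) * (1 - r) ^ 2 ≤ 1 := by nlinarith [sq_nonneg (1 - r)]
  have step2 : (1 - r) ^ 3 * (8 * C ^ 2 * S + 2 * m * (C * S) * ε ^ 2)
      ≤ (2 * m * ε ^ 2 + 8) * S := by
    have e1 : (1 - r) ^ 3 * (8 * C ^ 2 * S) = 8 * ((C * (1 - r)) ^ 2 * (1 - r) * S) := by ring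
    have e2 : (1 - r) ^ 3 * (2 * m * (C * S) * ε ^ 2)
        = 2 * m * ε ^ 2 * ((C * (1 - r)) * (1 - r) ^ 2 * S) := by ring
    have b1 : (C * (1 - r)) ^ 2 * (1 - r) * S ≤ 1 * S := mul_le_mul_of_nonneg_right hgg1 hS0
    have b2 : (C * (1 - r)) * (1 - r) ^ 2 * S ≤ 1 * S := mul_le_mul_of_nonneg_right hgg2 hS0
    have b2' := mul_le_mul_of_nonneg_left b2 hm0
    rw [mul_add, e1, e2]
    nlinarith [b1, b2']
  linarith


/-- **Smallest singular value of a corner-perturbed shifted Jordan block.**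
If `|z − c| < 1`, `2|z − c|^m < ε`, `E` has `(m,1)` entry `ε` and zeros elsewhere, then
`σ_m(B − zI + E) ≥ ε (1 − |z − c|)^{3/2} / √(2mε² + 8)`. -/
theorem jordan_block_perturbed_smallest_singular_value (m : ℕ) (hm : 0 < m) (z c : ℂ)
    (ε : ℝ) (hε : 0 < ε) (hz : ‖z - c‖ < 1)
    (h2 : 2 * ‖z - c‖ ^ m < ε) :
    ε * (1 - ‖z - c‖) ^ ((3 : ℝ) / 2) /
        Real.sqrt (2 * m * ε ^ 2 + 8) ≤
      sMin (jordanBlock m c - z • 1 +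
        Matrix.of fun i j : Fin m =>
          if (i : ℕ) = m - 1 ∧ (j : ℕ) = 0 then (ε : ℂ) else 0) := by
  haveI : NeZero m := ⟨hm.ne'⟩
  set r := ‖z - c‖ with hrdef
  have hr0 : 0 ≤ r := norm_nonneg _
  have h1r : (0:ℝ) < 1 - r := by linarith
  have hD0 : (0:ℝ) < 2 * m * ε ^ 2 + 8 := by positivity
  set A := jordanBlock m c - z • 1 +
      Matrix.of (fun i j : Fin m =>
        if (i : ℕ) = m - 1 ∧ (j : ℕ) = 0 then (ε : ℂ) else 0) with hAdef
  have hAentry : ∀ i j : Fin m, A i j =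
      (if (j : ℕ) = (i : ℕ) then (c - z) else if (j : ℕ) = (i : ℕ) + 1 then 1 else 0) +
        (if (i : ℕ) = m - 1 ∧ (j : ℕ) = 0 then (ε : ℂ) else 0) := by
    intro i j
    simp only [hAdef, Matrix.add_apply, Matrix.sub_apply, Matrix.smul_apply, jordanBlock,
      Matrix.of_apply, smul_eq_mul, Matrix.one_apply]
    congr 1
    by_cases hij : i = j
    · subst hij; simp
    · have hji : ¬ ((j : ℕ) = (i : ℕ)) := fun h => hij (Fin.ext h.symm)
      simp [hji, hij]
  apply sMin_ge
  · have := Real.rpow_nonneg h1r.le ((3:ℝ)/2)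
    positivity
  intro x
  set y := A.mulVec x with hydef
  set X : ℕ → ℂ := fun k => if h : k < m then x ⟨k, h⟩ else 0 with hXdef
  set Y : ℕ → ℂ := fun k => if h : k < m then y ⟨k, h⟩ else 0 with hYdef
  have hX : ∀ k, m ≤ k → X k = 0 := by
    intro k hk; simp only [hXdef]; rw [dif_neg (by omega)]
  have hrc : ‖c - z‖ = r := by rw [hrdef, norm_sub_rev]
  have hrec : ∀ k < m, Y k = (c - z) * X k + X (k + 1) +
      (if k = m - 1 then (ε : ℂ) * X 0 else 0) := by
    intro k hk
    have hYk : Y k = ∑ j : Fin m, A ⟨k, hk⟩ j * x j := by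
      simp only [hYdef]; rw [dif_pos hk]; rfl
    rw [hYk]
    have hstep : ∀ j : Fin m, A ⟨k, hk⟩ j * x j =
        (if (j : ℕ) = k then (c - z) * x j else 0) +
          ((if (j : ℕ) = k + 1 then x j else 0) +
            (if (j : ℕ) = 0 then (if k = m - 1 then (ε : ℂ) * x j else 0) else 0)) := by
      intro j
      rw [hAentry]
      simp only [show ((⟨k, hk⟩ : Fin m) : ℕ) = k from rfl]
      split_ifs
      all_goals try ring
      all_goals (exfalso; omega)
    rw [Finset.sum_congr rfl fun j _ => hstep j, Finset.sum_add_distrib,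
      Finset.sum_add_distrib, sum_ite_coe, sum_ite_coe, sum_ite_coe]
    rw [dif_pos hk, dif_pos hm]
    simp only [hXdef]
    rw [dif_pos hk, dif_pos hm]
    by_cases hk1 : k + 1 < m
    · rw [dif_pos hk1]; ring
    · rw [dif_neg hk1]; ring
  have key := key_ineq m hm (c - z) ε hε (by rw [hrc]; exact hz)
    (by rw [hrc]; exact h2) X Y hX hrec
  rw [hrc] at key
  -- convert Fin sums to range sums
  have hsx : ∑ i : Fin m, ‖x i‖ ^ 2 = ∑ k ∈ range m, ‖X k‖ ^ 2 := by
    rw [← Fin.sum_univ_eq_sum_range (fun k => ‖X k‖ ^ 2) m]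
    refine Finset.sum_congr rfl fun i _ => ?_
    simp only [hXdef]
    rw [dif_pos i.isLt]
  have hsy : ∑ i : Fin m, ‖y i‖ ^ 2 = ∑ k ∈ range m, ‖Y k‖ ^ 2 := by
    rw [← Fin.sum_univ_eq_sum_range (fun k => ‖Y k‖ ^ 2) m]
    refine Finset.sum_congr rfl fun i _ => ?_
    simp only [hYdef]
    rw [dif_pos i.isLt]
  have hbsq : (ε * (1 - r) ^ ((3:ℝ)/2) / Real.sqrt (2 * m * ε ^ 2 + 8)) ^ 2
      = ε ^ 2 * (1 - r) ^ 3 / (2 * m * ε ^ 2 + 8) := by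
    rw [div_pow, mul_pow, Real.sq_sqrt hD0.le]
    congr 1
    congr 1
    rw [← Real.rpow_natCast ((1 - r) ^ ((3:ℝ)/2)) 2, ← Real.rpow_mul h1r.le]
    norm_num
  rw [hbsq, hsx, hsy, div_mul_eq_mul_div, div_le_iff₀ hD0]
  calc ε ^ 2 * (1 - r) ^ 3 * ∑ k ∈ range m, ‖X k‖ ^ 2
      ≤ (2 * m * ε ^ 2 + 8) * ∑ k ∈ range m, ‖Y k‖ ^ 2 := key
    _ = (∑ k ∈ range m, ‖Y k‖ ^ 2) * (2 * m * ε ^ 2 + 8) := by ring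
end

section
/- Let n be a positive integer, γ ≥ 5 a real number with n ≥ γ², let z ∈ ℂ with |z| ≤ 1/4, let T be the n × n nilpotent matrix with ones on the superdiagonal and zeros elsewhere, and let R be any n × n matrix each of whose entries equals ±n^{−γ}. Then the smallest singular value of T + R − zI is at least 0.15 · n^{−γ}. -/
open Matrix

/-- The `n × n` nilpotent matrix with ones on the superdiagonal and zeros elsewhere. -/
def superDiag (n : ℕ) : Matrix (Fin n) (Fin n) ℂ :=
  Matrix.of fun i j => if (j : ℕ) = (i : ℕ) + 1 then 1 else 0

open Finset
lemma sv_exists {n : ℕ} (M : Matrix (Fin n) (Fin n) ℂ) (i : Fin n) :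
    ∃ v : Fin n → ℂ, (∑ j, Complex.normSq (v j)) = 1 ∧
      sv M i = Real.sqrt (∑ k, Complex.normSq ((M *ᵥ v) k)) := by
  set h := Matrix.isHermitian_conjTranspose_mul_self M
  refine ⟨⇑(h.eigenvectorBasis i), ?_, ?_⟩
  · have h1 : ‖h.eigenvectorBasis i‖ = 1 := h.eigenvectorBasis.orthonormal.1 i
    rw [EuclideanSpace.norm_eq] at h1
    have h2 : ∑ j, ‖(h.eigenvectorBasis i) j‖^2 = 1 := by
      have h3 := congrArg (·^2) h1
      simp only [one_pow] at h3
      rw [← h3, Real.sq_sqrt (Finset.sum_nonneg (fun j _ => sq_nonneg _))]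
    rw [← h2]
    congr 1; ext j
    rw [Complex.normSq_eq_norm_sq]
  · unfold sv
    congr 1
    rw [h.eigenvalues_eq i]
    set v := ⇑(h.eigenvectorBasis i)
    rw [← Matrix.mulVec_mulVec, dotProduct_mulVec, ← Matrix.star_mulVec]
    simp only [dotProduct, Pi.star_apply, RCLike.star_def, RCLike.re_to_complex,
      Complex.re_sum, ← Complex.normSq_eq_conj_mul_self, Complex.ofReal_re]


lemma myGeom_le (r : ℝ) (h0 : 0 ≤ r) (h1 : r < 1) (m : ℕ) :
    ∑ j ∈ Finset.range m, r ^ j ≤ (1 - r)⁻¹ := by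
  have h := geom_sum_eq (by linarith : r ≠ 1) m
  have hrm : (0:ℝ) ≤ r ^ m := pow_nonneg h0 m
  have h2 : (0:ℝ) < 1 - r := by linarith
  rw [h, div_le_iff_of_neg (by linarith : r - 1 < 0)]
  rw [inv_mul_eq_div, div_le_iff₀ h2]
  nlinarith

lemma finGeom_le (n : ℕ) (r : ℝ) (h0 : 0 ≤ r) (h1 : r < 1) :
    ∑ j : Fin n, r ^ (j : ℕ) ≤ (1 - r)⁻¹ := by
  rw [Fin.sum_univ_eq_sum_range (fun j => r ^ j) n]
  exact myGeom_le r h0 h1 n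

lemma superDiag_mulVec (n : ℕ) (x : Fin n → ℂ) (y : ℕ → ℂ)
    (hy : ∀ j : Fin n, y (j : ℕ) = x j) (hy0 : ∀ m, ¬ m < n → y m = 0) (k : Fin n) :
    (superDiag n *ᵥ x) k = y ((k : ℕ) + 1) := by
  have step : ∀ j : Fin n, superDiag n k j * x j
      = (fun m : ℕ => if m = (k:ℕ)+1 then y m else 0) (j : ℕ) := by
    intro j
    simp only [superDiag, Matrix.of_apply, ite_mul, one_mul, zero_mul]
    split_ifs with h
    · rw [hy]
    · rfl
  have : (superDiag n *ᵥ x) k = ∑ j : Fin n, (fun m : ℕ => if m = (k:ℕ)+1 then y m else 0) (j:ℕ) := by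
    rw [Matrix.mulVec, dotProduct]
    exact Finset.sum_congr rfl (fun j _ => step j)
  rw [this, Fin.sum_univ_eq_sum_range (fun m => if m = (k:ℕ)+1 then y m else 0) n,
    Finset.sum_ite_eq' (Finset.range n) ((k:ℕ)+1) y]
  split_ifs with h
  · rfl
  · exact (hy0 _ (fun hc => h (Finset.mem_range.2 hc))).symm


set_option maxHeartbeats 1000000 in
lemma exp_bound (n : ℕ) (γ : ℝ) (hγ : 5 ≤ γ) (hnγ : γ^2 ≤ (n:ℝ)) :
    (1/4:ℝ)^(n-1) ≤ 0.002 * (n:ℝ)^(-γ) := by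
  have hγ0 : (0:ℝ) ≤ γ := by linarith
  have hn25 : (25:ℝ) ≤ (n:ℝ) := by nlinarith
  have hn0 : (0:ℝ) < (n:ℝ) := by linarith
  set t : ℝ := (n:ℝ) ^ ((1:ℝ)/8) with hT
  have ht0 : 0 < t := Real.rpow_pos_of_pos hn0 _
  have htn : t ^ (8:ℕ) = (n:ℝ) := by
    rw [hT, ← Real.rpow_natCast ((n:ℝ)^((1:ℝ)/8)) 8, ← Real.rpow_mul (le_of_lt hn0)]
    norm_num
  have ht : (1.49:ℝ) ≤ t := by
    by_contra hlt
    push_neg at hlt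
    have h8 : ((1.49:ℝ))^(8:ℕ) ≤ (n:ℝ) := by norm_num; linarith
    have := pow_lt_pow_left₀ hlt ht0.le (by norm_num : (8:ℕ) ≠ 0)
    rw [htn] at this
    linarith
  have hγt : γ ≤ t^4 := by
    nlinarith [htn, sq_nonneg (γ - t^4), ht0, pow_pos ht0 4]
  have hlogn : Real.log (n:ℝ) = 8 * Real.log t := by
    rw [hT, Real.log_rpow hn0]; ring
  have hlogt : Real.log t ≤ t - 1 := Real.log_le_sub_one_of_pos ht0
  have hlogt0 : 0 ≤ Real.log t := Real.log_nonneg (by linarith)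
  have hl2 : (0.6931471803:ℝ) < Real.log 2 := Real.log_two_gt_d9
  -- main polynomial inequality
  have hkey : γ * Real.log (n:ℝ) ≤ (2*((n:ℝ)-1) - 9) * Real.log 2 := by
    have h1 : γ * Real.log (n:ℝ) ≤ t^4 * (8*(t-1)) := by
      rw [hlogn]
      have : γ * (8 * Real.log t) ≤ t^4 * (8 * Real.log t) := by
        apply mul_le_mul_of_nonneg_right hγt; positivity
      nlinarith [this, mul_le_mul_of_nonneg_left hlogt (by positivity : (0:ℝ) ≤ 8*t^4)]
    have hsub : 2*((n:ℝ)-1) - 9 = 2*(t^8-1)-9 := by rw [htn]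
    rw [hsub]
    have h2 : t^4 * (8*(t-1)) ≤ (2*(t^8-1)-9) * 0.6931471803 := by
      nlinarith [ht, pow_pos ht0 4, sq_nonneg (t-1.49), mul_pos (pow_pos ht0 4) (pow_pos ht0 4), sq_nonneg (t^4 - 2), sq_nonneg (t^2-1.49*t), mul_nonneg (mul_nonneg (sub_nonneg.2 ht) (sub_nonneg.2 ht)) (pow_pos ht0 4).le, mul_nonneg (sub_nonneg.2 ht) (pow_pos ht0 6).le]
    have h3 : (0:ℝ) ≤ 2*(t^8-1)-9 := by nlinarith [ht]
    calc γ * Real.log (n:ℝ) ≤ t^4 * (8*(t-1)) := h1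
      _ ≤ (2*(t^8-1)-9) * 0.6931471803 := h2
      _ ≤ (2*(t^8-1)-9) * Real.log 2 := by nlinarith [hl2, h3]
  have hn1 : 1 ≤ n := by
    have : (1:ℝ) ≤ (n:ℝ) := by linarith
    exact_mod_cast this
  have hp4 : (0:ℝ) < (4:ℝ)^(n-1) := by positivity
  have hpn : (0:ℝ) < (n:ℝ)^γ := Real.rpow_pos_of_pos hn0 γ
  have hmain : (n:ℝ)^γ ≤ 0.002 * 4^(n-1) := by
    rw [← Real.log_le_log_iff hpn (by positivity), Real.log_rpow hn0,
      Real.log_mul (by norm_num) (ne_of_gt hp4), Real.log_pow]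
    have hlog4 : Real.log 4 = 2 * Real.log 2 := by
      rw [show (4:ℝ) = 2^2 by norm_num, Real.log_pow]; push_cast; ring
    have h002 : Real.log (1/512:ℝ) ≤ Real.log 0.002 := Real.log_le_log (by norm_num) (by norm_num)
    have h512 : Real.log (1/512:ℝ) = -(9 * Real.log 2) := by
      rw [show (1/512:ℝ) = (2^9)⁻¹ by norm_num, Real.log_inv, Real.log_pow]; push_cast; ring
    have hcast : ((n-1:ℕ):ℝ) = (n:ℝ) - 1 := by
      rw [Nat.cast_sub hn1]; norm_num
    rw [hlog4, hcast]
    nlinarith [hkey, h002, h512, hl2]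
  have hrw : (1/4:ℝ)^(n-1) = 1/(4:ℝ)^(n-1) := by rw [div_pow, one_pow]
  rw [hrw, Real.rpow_neg hn0.le, ← div_eq_mul_inv]
  rw [div_le_div_iff₀ hp4 hpn]
  linarith [hmain]


lemma rpow_neg_le25 (n : ℕ) (hn : (25:ℝ) ≤ (n:ℝ)) (a b : ℝ) (hb : 0 ≤ b) (hab : b ≤ a) :
    (n:ℝ)^(-a) ≤ (25:ℝ)^(-b) := by
  rw [Real.rpow_neg (by linarith), Real.rpow_neg (by norm_num)]
  apply inv_anti₀ (Real.rpow_pos_of_pos (by norm_num) b)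
  calc (25:ℝ)^b ≤ (n:ℝ)^b := Real.rpow_le_rpow (by norm_num) hn hb
    _ ≤ (n:ℝ)^a := Real.rpow_le_rpow_of_exponent_le (by linarith) hab

lemma eval25_4 : (25:ℝ)^(-(4:ℝ)) = 1/390625 := by
  rw [Real.rpow_neg (by norm_num), show (4:ℝ) = ((4:ℕ):ℝ) by norm_num, Real.rpow_natCast]
  norm_num

lemma eval25_5 : (25:ℝ)^(-(5:ℝ)) = 1/9765625 := by
  rw [Real.rpow_neg (by norm_num), show (5:ℝ) = ((5:ℕ):ℝ) by norm_num, Real.rpow_natCast]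
  norm_num

lemma eval25_72 : (25:ℝ)^(-(7/2:ℝ)) = 1/78125 := by
  have : (25:ℝ)^((7:ℝ)/2) = 5^(7:ℕ) := by
    rw [show (25:ℝ) = (5:ℝ)^((2:ℕ):ℝ) by norm_num [Real.rpow_natCast],
      ← Real.rpow_mul (by norm_num), ← Real.rpow_natCast 5 7]
    norm_num
  rw [Real.rpow_neg (by norm_num), this]
  norm_num

set_option maxHeartbeats 4000000 in
lemma key_lemma (n : ℕ) (hn : 0 < n) (γ : ℝ) (hγ : 5 ≤ γ) (hnγ : γ ^ 2 ≤ (n : ℝ)) (z : ℂ)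
    (hz : ‖z‖ ≤ 1 / 4) (R : Matrix (Fin n) (Fin n) ℂ)
    (hRa : ∀ i j, ‖R i j‖ = (n : ℝ) ^ (-γ))
    (x : Fin n → ℂ) (hx : ∑ j, Complex.normSq (x j) = 1) :
    0.15 * (n : ℝ) ^ (-γ) ≤ Real.sqrt (∑ k, Complex.normSq (((superDiag n + R - z • 1) *ᵥ x) k)) := by
  have hγ0 : (0:ℝ) ≤ γ := by linarith
  have hn25 : (25:ℝ) ≤ (n:ℝ) := by nlinarith
  have hn0 : (0:ℝ) < (n:ℝ) := by linarith
  set N : ℝ := (n:ℝ) ^ (-γ) with hNdef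
  have hN : 0 < N := Real.rpow_pos_of_pos hn0 _
  set Mx : Fin n → ℂ := (superDiag n + R - z • 1) *ᵥ x with hMx
  set β : ℝ := Real.sqrt (∑ k, Complex.normSq (Mx k)) with hβ
  have hβ0 : 0 ≤ β := Real.sqrt_nonneg _
  by_contra hcon
  push_neg at hcon
  -- y : ℕ-indexed version of x
  set y : ℕ → ℂ := fun j => if h : j < n then x ⟨j, h⟩ else 0 with hydef
  have hyx : ∀ j : Fin n, y (j:ℕ) = x j := fun j => dif_pos j.isLt
  have hy0 : ∀ m, ¬ m < n → y m = 0 := fun m hm => dif_neg hm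
  set Rx : Fin n → ℂ := fun k => ∑ j, R k j * x j with hRx
  -- row formula
  have hrow : ∀ k : Fin n, Mx k = y ((k:ℕ)+1) - z * x k + Rx k := by
    intro k
    rw [hMx, Matrix.sub_mulVec, Matrix.add_mulVec]
    have h1 : ((z • (1 : Matrix (Fin n) (Fin n) ℂ)) *ᵥ x) k = z * x k := by
      rw [Matrix.smul_mulVec, Matrix.one_mulVec]; rfl
    have h2 : (R *ᵥ x) k = Rx k := rfl
    have h3 := superDiag_mulVec n x y hyx hy0 k
    simp only [Pi.sub_apply, Pi.add_apply, h1, h2, h3]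
    ring
  -- per-entry bounds
  have hβk : ∀ k : Fin n, ‖Mx k‖ ≤ β := by
    intro k
    rw [hβ, Complex.norm_def]
    apply Real.sqrt_le_sqrt
    exact Finset.single_le_sum (f := fun k => Complex.normSq (Mx k))
      (fun i _ => Complex.normSq_nonneg _) (Finset.mem_univ k)
  have hx1 : ∀ j : Fin n, ‖x j‖ ≤ 1 := by
    intro j
    have h1 : Complex.normSq (x j) ≤ 1 := by
      rw [← hx]
      exact Finset.single_le_sum (f := fun j => Complex.normSq (x j))
        (fun i _ => Complex.normSq_nonneg _) (Finset.mem_univ j)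
    rw [Complex.norm_def]
    calc Real.sqrt (Complex.normSq (x j)) ≤ Real.sqrt 1 := Real.sqrt_le_sqrt h1
      _ = 1 := Real.sqrt_one
  -- ℓ¹ norm
  set S : ℝ := ∑ j, ‖x j‖ with hS
  have hS0 : 0 ≤ S := Finset.sum_nonneg (fun j _ => norm_nonneg _)
  have hSsqrt : S ≤ Real.sqrt n := by
    have h1 : S^2 ≤ (n:ℝ) * 1 := by
      have h2 := sq_sum_le_card_mul_sum_sq (s := (Finset.univ : Finset (Fin n)))
        (f := fun j => ‖x j‖)
      simp only [Finset.card_univ, Fintype.card_fin] at h2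
      have h3 : ∑ j, (‖x j‖)^2 = 1 := by
        rw [← hx]
        exact Finset.sum_congr rfl (fun j _ => Complex.sq_norm _)
      rw [h3] at h2
      exact_mod_cast h2
    rw [mul_one] at h1
    exact (Real.le_sqrt hS0 hn0.le).2 h1
  have hRxle : ∀ k : Fin n, ‖Rx k‖ ≤ N * S := by
    intro k
    rw [hRx]
    calc ‖∑ j, R k j * x j‖ ≤ ∑ j, ‖R k j * x j‖ :=
          norm_sum_le _ _
      _ = ∑ j, N * ‖x j‖ := by
          refine Finset.sum_congr rfl (fun j _ => ?_)
          rw [norm_mul, hRa]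
      _ = N * S := by rw [hS, Finset.mul_sum]
  -- numeric rpow facts
  have hA1 : (n:ℝ) * N ≤ 1/390625 := by
    have e1 : (n:ℝ)^(-(γ-1)) = (n:ℝ) * N := by
      rw [hNdef, show -(γ-1) = 1 + -γ by ring, Real.rpow_add hn0, Real.rpow_one]
    rw [← e1, ← eval25_4]
    exact rpow_neg_le25 n hn25 _ 4 (by norm_num) (by linarith)
  have hA2 : (n:ℝ) * N * Real.sqrt (n:ℝ) ≤ 1/78125 := by
    have e1 : (n:ℝ)^(-(γ-3/2)) = (n:ℝ) * N * Real.sqrt (n:ℝ) := by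
      rw [hNdef, Real.sqrt_eq_rpow, show -(γ-3/2) = 1 + -γ + 1/2 by ring,
        Real.rpow_add hn0, Real.rpow_add hn0, Real.rpow_one]
    rw [← e1, ← eval25_72]
    exact rpow_neg_le25 n hn25 _ (7/2) (by norm_num) (by linarith)
  have hA3 : N ≤ 1/9765625 := by
    rw [hNdef, ← eval25_5]
    exact rpow_neg_le25 n hn25 _ 5 (by norm_num) (by linarith)
  -- error recursion
  have ind : ∀ C : ℝ, (∀ k : Fin n, ‖Rx k‖ + β ≤ C) →
      ∀ j, j < n → ‖y j - y 0 * z^j‖ ≤ 4/3 * C := by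
    intro C hC j
    induction j with
    | zero =>
      intro _
      have hCnn : 0 ≤ C := le_trans (add_nonneg (norm_nonneg _) hβ0) (hC ⟨0, hn⟩)
      simp only [pow_zero, mul_one, sub_self, norm_zero]
      linarith
    | succ j ih =>
      intro hj1
      have hjn : j < n := Nat.lt_of_succ_lt hj1
      have k : Fin n := ⟨j, hjn⟩
      have hCnn : 0 ≤ C :=
        le_trans (add_nonneg (norm_nonneg _) hβ0) (hC ⟨j, hjn⟩)
      have hiden : y (j+1) - y 0 * z^(j+1) =
          z * (y j - y 0 * z^j) + (Mx ⟨j, hjn⟩ - Rx ⟨j, hjn⟩) := by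
        have h := hrow ⟨j, hjn⟩
        have hxk : x ⟨j, hjn⟩ = y j := (hyx ⟨j, hjn⟩).symm
        rw [h, hxk]
        ring
      have habs0 : 0 ≤ ‖y j - y 0 * z^j‖ := norm_nonneg _
      have h5 := ih hjn
      have h6 := hC ⟨j, hjn⟩
      have h7 := hβk ⟨j, hjn⟩
      calc ‖y (j+1) - y 0 * z^(j+1)‖
          = ‖z * (y j - y 0 * z^j) + (Mx ⟨j, hjn⟩ - Rx ⟨j, hjn⟩)‖ := by rw [hiden]
        _ ≤ ‖z * (y j - y 0 * z^j)‖ + ‖Mx ⟨j, hjn⟩ - Rx ⟨j, hjn⟩‖ :=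
            norm_add_le _ _
        _ ≤ ‖z‖ * ‖y j - y 0 * z^j‖
            + (‖Mx ⟨j, hjn⟩‖ + ‖Rx ⟨j, hjn⟩‖) := by
            rw [norm_mul]
            have h4 : ‖Mx ⟨j, hjn⟩ - Rx ⟨j, hjn⟩‖
                ≤ ‖Mx ⟨j, hjn⟩‖ + ‖Rx ⟨j, hjn⟩‖ := by
              simpa [sub_eq_add_neg] using norm_add_le (Mx ⟨j, hjn⟩) (-Rx ⟨j, hjn⟩)
            linarith
        _ ≤ (1/4) * (4/3 * C) + C := by
            have hm := mul_le_mul hz h5 habs0 (by norm_num : (0:ℝ) ≤ 1/4)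
            linarith
        _ = 4/3 * C := by ring
  set a : ℝ := ‖y 0‖ with hadef
  have ha0 : 0 ≤ a := norm_nonneg _
  have hy00 : y 0 = x ⟨0, hn⟩ := dif_pos hn
  have ha1 : a ≤ 1 := by rw [hadef, hy00]; exact hx1 _
  -- generic per-entry bound
  have hstage : ∀ C : ℝ, (∀ k : Fin n, ‖Rx k‖ + β ≤ C) →
      ∀ j : Fin n, ‖x j‖ ≤ a * (1/4)^(j:ℕ) + 4/3 * C := by
    intro C hC j
    have h1 := ind C hC (j:ℕ) j.isLt
    have h3 : ‖y 0 * z^(j:ℕ)‖ ≤ a * (1/4)^(j:ℕ) := by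
      rw [norm_mul, norm_pow]
      exact mul_le_mul_of_nonneg_left
        (pow_le_pow_left₀ (norm_nonneg z) hz (j:ℕ)) ha0
    have h2 : ‖x j‖
        ≤ ‖y (j:ℕ) - y 0 * z^(j:ℕ)‖ + ‖y 0 * z^(j:ℕ)‖ := by
      calc ‖x j‖
          = ‖(y (j:ℕ) - y 0 * z^(j:ℕ)) + y 0 * z^(j:ℕ)‖ := by
            rw [sub_add_cancel, hyx j]
        _ ≤ _ := norm_add_le _ _
    linarith
  -- refined ℓ¹ bound
  have hGle : ∑ j : Fin n, (1/4:ℝ)^(j:ℕ) ≤ 4/3 := by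
    have := finGeom_le n (1/4) (by norm_num) (by norm_num)
    norm_num at this ⊢
    linarith
  have hG0 : 0 ≤ ∑ j : Fin n, (1/4:ℝ)^(j:ℕ) :=
    Finset.sum_nonneg (fun j _ => by positivity)
  have hl1 : S ≤ 1.3334 := by
    have hC1 : ∀ k : Fin n, ‖Rx k‖ + β ≤ N * S + β :=
      fun k => add_le_add_left (hRxle k) β
    have hsum : S ≤ ∑ j : Fin n, (a * (1/4)^(j:ℕ) + 4/3 * (N*S+β)) := by
      rw [hS]
      exact Finset.sum_le_sum (fun j _ => hstage (N*S+β) hC1 j)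
    have heq : ∑ j : Fin n, (a * (1/4)^(j:ℕ) + 4/3 * (N*S+β))
        = a * (∑ j : Fin n, (1/4:ℝ)^(j:ℕ)) + (n:ℝ) * (4/3 * (N*S+β)) := by
      rw [Finset.sum_add_distrib, ← Finset.mul_sum, Finset.sum_const, Finset.card_univ,
        Fintype.card_fin, nsmul_eq_mul]
    rw [heq] at hsum
    have hb1 : a * (∑ j : Fin n, (1/4:ℝ)^(j:ℕ)) ≤ 4/3 := by
      calc a * (∑ j : Fin n, (1/4:ℝ)^(j:ℕ)) ≤ 1 * (4/3) :=
            mul_le_mul ha1 hGle hG0 (by norm_num)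
        _ = 4/3 := by ring
    have hb2 : (n:ℝ) * N * S ≤ 1/78125 :=
      le_trans (mul_le_mul_of_nonneg_left hSsqrt (by positivity)) hA2
    have hb3 : (n:ℝ) * β ≤ 0.15 * (1/390625) := by
      have h1 : (n:ℝ) * β ≤ (n:ℝ) * (0.15 * N) :=
        mul_le_mul_of_nonneg_left hcon.le hn0.le
      nlinarith [hA1]
    nlinarith [hsum, hb1, hb2, hb3, hn0]
  -- refined per-entry constant
  have hC2 : ∀ k : Fin n, ‖Rx k‖ + β ≤ N * 1.3334 + β := by
    intro k
    have := mul_le_mul_of_nonneg_left hl1 hN.le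
    have h2 := hRxle k
    linarith
  set E : ℝ := 4/3 * (N * 1.3334 + β) with hEdef
  have hE0 : 0 ≤ E := by
    rw [hEdef]; positivity
  have hEN : E ≤ 1.978 * N := by
    rw [hEdef]; nlinarith [hcon, hN]
  have hstage2 : ∀ j : Fin n, ‖x j‖ ≤ a * (1/4)^(j:ℕ) + E :=
    fun j => hstage _ hC2 j
  have hnE : (n:ℝ) * E ≤ 0.0000051 := by
    have h1 : (n:ℝ) * E ≤ (n:ℝ) * (1.978 * N) := mul_le_mul_of_nonneg_left hEN hn0.le
    nlinarith [hA1]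
  have hEsmall : E ≤ 0.000000203 := by nlinarith [hA3, hEN, hN]
  -- lower bound on a
  have hx0 : (0.9682:ℝ) ≤ a := by
    have h16 : ∑ j : Fin n, (1/16:ℝ)^(j:ℕ) ≤ 16/15 := by
      have := finGeom_le n (1/16) (by norm_num) (by norm_num)
      norm_num at this ⊢
      linarith
    have h1 : (1:ℝ) ≤ ∑ j : Fin n, (a * (1/4)^(j:ℕ) + E)^2 := by
      calc (1:ℝ) = ∑ j : Fin n, Complex.normSq (x j) := hx.symm
        _ ≤ ∑ j : Fin n, (a * (1/4)^(j:ℕ) + E)^2 := by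
          apply Finset.sum_le_sum
          intro j _
          have h2 : Complex.normSq (x j) = (‖x j‖)^2 := (Complex.sq_norm _).symm
          rw [h2]
          exact pow_le_pow_left₀ (norm_nonneg _) (hstage2 j) 2
    have h3 : ∑ j : Fin n, (a * (1/4)^(j:ℕ) + E)^2
        = a^2 * (∑ j : Fin n, (1/16:ℝ)^(j:ℕ)) + 2*a*E * (∑ j : Fin n, (1/4:ℝ)^(j:ℕ))
          + (n:ℝ) * E^2 := by
      have hterm : ∀ j : Fin n, (a * (1/4)^(j:ℕ) + E)^2
          = a^2 * (1/16:ℝ)^(j:ℕ) + 2*a*E * (1/4)^(j:ℕ) + E^2 := by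
        intro j
        have h4 : ((1/4:ℝ))^(j:ℕ) * ((1/4:ℝ))^(j:ℕ) = (1/16:ℝ)^(j:ℕ) := by
          rw [← mul_pow]; norm_num
        rw [← h4]; ring
      rw [Finset.sum_congr rfl (fun j _ => hterm j)]
      rw [Finset.sum_add_distrib, Finset.sum_add_distrib, ← Finset.mul_sum, ← Finset.mul_sum,
        Finset.sum_const, Finset.card_univ, Fintype.card_fin, nsmul_eq_mul]
    rw [h3] at h1
    have h5 : (n:ℝ) * E^2 ≤ 0.0000051 * 0.000000203 := by
      have := mul_le_mul hnE hEsmall hE0 (by norm_num)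
      nlinarith [this]
    have h6 : 2*a*E * (∑ j : Fin n, (1/4:ℝ)^(j:ℕ)) ≤ 2 * 0.000000203 * (4/3) := by
      have hae : a * E ≤ 0.000000203 := by nlinarith [ha1, hE0, hEsmall, ha0]
      nlinarith [hG0, hGle, hae, hE0, ha0]
    have h7 : a^2 * (∑ j : Fin n, (1/16:ℝ)^(j:ℕ)) ≤ a^2 * (16/15) := by
      have h160 : 0 ≤ (16/15:ℝ) := by norm_num
      nlinarith [h16, sq_nonneg a]
    nlinarith [h1, h5, h6, h7, ha0, ha1]
  -- last row
  have hl' : n - 1 < n := Nat.sub_lt hn one_pos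
  have hlcoe : ((⟨n-1, hl'⟩ : Fin n) : ℕ) + 1 = n := Nat.succ_pred_eq_of_pos hn
  have hrowl : Mx ⟨n-1, hl'⟩ = Rx ⟨n-1, hl'⟩ - z * x ⟨n-1, hl'⟩ := by
    have h := hrow ⟨n-1, hl'⟩
    rw [hlcoe] at h
    rw [h, hy0 n (lt_irrefl n)]
    ring
  -- decompose Rx at last row
  have hsplit : Rx ⟨n-1, hl'⟩ = y 0 * (∑ j : Fin n, R ⟨n-1, hl'⟩ j * z^(j:ℕ))
      + ∑ j : Fin n, R ⟨n-1, hl'⟩ j * (x j - y 0 * z^(j:ℕ)) := by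
    rw [hRx]
    simp only [Finset.mul_sum, ← Finset.sum_add_distrib]
    exact Finset.sum_congr rfl (fun j _ => by ring)
  have hW : (2/3) * N ≤ ‖∑ j : Fin n, R ⟨n-1, hl'⟩ j * z^(j:ℕ)‖ := by
    set W := ∑ j : Fin n, R ⟨n-1, hl'⟩ j * z^(j:ℕ) with hWdef
    set T := ∑ j ∈ Finset.univ.erase (⟨0, hn⟩ : Fin n), R ⟨n-1, hl'⟩ j * z^(j:ℕ) with hTdef
    have hmem : (⟨0, hn⟩ : Fin n) ∈ (Finset.univ : Finset (Fin n)) := Finset.mem_univ _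
    have h00 : (((⟨0, hn⟩ : Fin n)):ℕ) = 0 := rfl
    have hT : T = W - R ⟨n-1, hl'⟩ (⟨0, hn⟩ : Fin n) * z^(((⟨0, hn⟩ : Fin n)):ℕ) :=
      Finset.sum_erase_eq_sub hmem
    have htail : ‖T‖ ≤ N * (1/3) := by
      have hTb : ‖T‖ ≤ ∑ j ∈ Finset.univ.erase (⟨0, hn⟩ : Fin n), N * (1/4:ℝ)^(j:ℕ) := by
        refine le_trans (norm_sum_le _ _) (Finset.sum_le_sum ?_)
        intro j _
        rw [norm_mul, hRa, norm_pow]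
        exact mul_le_mul_of_nonneg_left (pow_le_pow_left₀ (norm_nonneg z) hz (j:ℕ)) hN.le
      have herase : ∑ j ∈ Finset.univ.erase (⟨0, hn⟩ : Fin n), N * (1/4:ℝ)^(j:ℕ)
          = N * ((∑ j : Fin n, (1/4:ℝ)^(j:ℕ)) - 1) := by
        rw [← Finset.mul_sum, Finset.sum_erase_eq_sub hmem, h00, pow_zero]
      rw [herase] at hTb
      nlinarith [hGle, hN, hTb]
    have habs1 : ‖R ⟨n-1, hl'⟩ (⟨0, hn⟩ : Fin n) * z^(((⟨0, hn⟩ : Fin n)):ℕ)‖ = N := by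
      rw [h00, pow_zero, mul_one, hRa]
    have htri : N ≤ ‖W‖ + ‖T‖ := by
      have heq : R ⟨n-1, hl'⟩ (⟨0, hn⟩ : Fin n) * z^(((⟨0, hn⟩ : Fin n)):ℕ) = W + (-T) := by
        rw [hT]; ring
      calc N = ‖R ⟨n-1, hl'⟩ (⟨0, hn⟩ : Fin n) * z^(((⟨0, hn⟩ : Fin n)):ℕ)‖ :=
            habs1.symm
        _ = ‖W + (-T)‖ := by rw [heq]
        _ ≤ ‖W‖ + ‖-T‖ := norm_add_le _ _
        _ = ‖W‖ + ‖T‖ := by rw [norm_neg]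
    linarith
  have hrem : ‖∑ j : Fin n, R ⟨n-1, hl'⟩ j * (x j - y 0 * z^(j:ℕ))‖
      ≤ N * ((n:ℝ) * E) := by
    calc ‖∑ j : Fin n, R ⟨n-1, hl'⟩ j * (x j - y 0 * z^(j:ℕ))‖
        ≤ ∑ j : Fin n, ‖R ⟨n-1, hl'⟩ j * (x j - y 0 * z^(j:ℕ))‖ :=
          norm_sum_le _ _
      _ ≤ ∑ j : Fin n, N * E := by
          apply Finset.sum_le_sum
          intro j _
          rw [norm_mul, hRa]
          apply mul_le_mul_of_nonneg_left _ hN.le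
          have h1 := ind _ hC2 (j:ℕ) j.isLt
          rw [hyx j] at h1
          calc ‖x j - y 0 * z^(j:ℕ)‖ ≤ 4/3 * (N * 1.3334 + β) := h1
            _ = E := hEdef.symm
      _ = N * ((n:ℝ) * E) := by
          rw [Finset.sum_const, Finset.card_univ, Fintype.card_fin, nsmul_eq_mul]; ring
  have hxl : ‖x ⟨n-1, hl'⟩‖ ≤ a * (1/4)^(n-1) + E := by
    have := hstage2 ⟨n-1, hl'⟩
    simpa using this
  have hexp : (1/4:ℝ)^(n-1) ≤ 0.002 * N := exp_bound n γ hγ hnγ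
  -- final contradiction
  have hMxl : ‖Rx ⟨n-1, hl'⟩‖ - ‖z * x ⟨n-1, hl'⟩‖
      ≤ ‖Mx ⟨n-1, hl'⟩‖ := by
    rw [hrowl]
    have := norm_add_le (Rx ⟨n-1, hl'⟩ - z * x ⟨n-1, hl'⟩) (z * x ⟨n-1, hl'⟩)
    simpa using this
  have hRxlow : a * ((2/3) * N) - N * ((n:ℝ) * E) ≤ ‖Rx ⟨n-1, hl'⟩‖ := by
    rw [hsplit]
    have h1 : ‖y 0 * (∑ j : Fin n, R ⟨n-1, hl'⟩ j * z^(j:ℕ))‖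
        = a * ‖∑ j : Fin n, R ⟨n-1, hl'⟩ j * z^(j:ℕ)‖ := by
      rw [norm_mul, hadef]
    have h2 : ‖y 0 * (∑ j : Fin n, R ⟨n-1, hl'⟩ j * z^(j:ℕ))‖
        ≤ ‖y 0 * (∑ j : Fin n, R ⟨n-1, hl'⟩ j * z^(j:ℕ))
            + ∑ j : Fin n, R ⟨n-1, hl'⟩ j * (x j - y 0 * z^(j:ℕ))‖
          + ‖∑ j : Fin n, R ⟨n-1, hl'⟩ j * (x j - y 0 * z^(j:ℕ))‖ := by
      have := norm_add_le
        (y 0 * (∑ j : Fin n, R ⟨n-1, hl'⟩ j * z^(j:ℕ))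
          + ∑ j : Fin n, R ⟨n-1, hl'⟩ j * (x j - y 0 * z^(j:ℕ)))
        (-(∑ j : Fin n, R ⟨n-1, hl'⟩ j * (x j - y 0 * z^(j:ℕ))))
      simpa using this
    have h3 : a * ((2/3) * N) ≤ a * ‖∑ j : Fin n, R ⟨n-1, hl'⟩ j * z^(j:ℕ)‖ :=
      mul_le_mul_of_nonneg_left hW ha0
    linarith [hrem, h1 ▸ h2, h3]
  have hzxl : ‖z * x ⟨n-1, hl'⟩‖ ≤ (1/4) * (a * (0.002 * N) + E) := by
    rw [norm_mul]
    have h1 : ‖x ⟨n-1, hl'⟩‖ ≤ a * (0.002 * N) + E := by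
      have h2 : a * (1/4:ℝ)^(n-1) ≤ a * (0.002 * N) :=
        mul_le_mul_of_nonneg_left hexp ha0
      linarith [hxl]
    exact mul_le_mul hz h1 (norm_nonneg _) (by norm_num)
  have hfinal : 0.15 * N < ‖Mx ⟨n-1, hl'⟩‖ := by
    have hb1 : 0.9682 * ((2/3) * N) ≤ a * ((2/3) * N) := by nlinarith [hx0, hN]
    have hb2 : N * ((n:ℝ) * E) ≤ 0.0000051 * N := by nlinarith [hnE, hN]
    have hb3 : a * (0.002 * N) ≤ 0.002 * N := by nlinarith [ha1, ha0, hN]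
    have hb4 : E ≤ 1.978 * N := hEN
    nlinarith [hMxl, hRxlow, hzxl, hN]
  exact absurd (le_trans hfinal.le (hβk ⟨n-1, hl'⟩)) (not_le.2 hcon)

/-- **Deterministic small-norm sign perturbations of the nilpotent Jordan block.**
If `γ ≥ 5`, `n ≥ γ²`, `|z| ≤ 1/4`, and each entry of `R` equals `±n^{−γ}`, then the
smallest singular value of `T + R − zI` is at least `0.15 n^{−γ}`. -/
theorem signed_perturbation_smallest_singular_value (n : ℕ) (hn : 0 < n)
    (γ : ℝ) (hγ : 5 ≤ γ) (hnγ : γ ^ 2 ≤ (n : ℝ)) (z : ℂ) (hz : ‖z‖ ≤ 1 / 4)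
    (R : Matrix (Fin n) (Fin n) ℂ)
    (hR : ∀ i j, R i j = (((n : ℝ) ^ (-γ) : ℝ) : ℂ) ∨ R i j = -(((n : ℝ) ^ (-γ) : ℝ) : ℂ)) :
    0.15 * (n : ℝ) ^ (-γ) ≤ sMin (superDiag n + R - z • 1) := by
  have hn25 : (25:ℝ) ≤ (n:ℝ) := by nlinarith
  have hRa : ∀ i j, ‖R i j‖ = (n : ℝ) ^ (-γ) := by
    intro i j
    have hge : (0:ℝ) ≤ (n : ℝ) ^ (-γ) := Real.rpow_nonneg (by linarith) _
    rcases hR i j with h | h <;> rw [h]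
    · rw [Complex.norm_of_nonneg hge]
    · rw [norm_neg, Complex.norm_of_nonneg hge]
  haveI : Nonempty (Fin n) := Fin.pos_iff_nonempty.mp hn
  apply le_ciInf
  intro i
  obtain ⟨v, hv1, hv2⟩ := sv_exists (superDiag n + R - z • 1) i
  rw [hv2]
  exact key_lemma n hn γ hγ hnγ z hz R hRa v hv1
end
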